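/- arXiv:1710.10820 — 2 statements merged into one kernel-verified Lean document; each statement's English description precedes it below -/
import Mathlib

section
/- Let M be a countable transitive model of ZF⁻ and suppose there exists a global well-order of M of order type Ord^M that is definable over M. Then there is a notion of class forcing, definable over M, which has two Boolean completions in M that are non-isomorphic, i.e., there is no isomorphism between them (in V) fixing ℙ. -/
set_option autoImplicit false

attribute [local instance] Classical.propDecidable

namespace CF

/-- First-order formulas of the language of set theory with `κ` class-predicate
variables (the languages `L^κ`) and `n` free set variables; `κ = 0` gives the
pure ∈-formulas. There is no class quantification. -/
inductive CFml : ℕ → ℕ → Type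
  | mem {κ n : ℕ} (i j : Fin n) : CFml κ n
  | eq {κ n : ℕ} (i j : Fin n) : CFml κ n
  | cls {κ n : ℕ} (X : Fin κ) (i : Fin n) : CFml κ n
  | not {κ n : ℕ} : CFml κ n → CFml κ n
  | or {κ n : ℕ} : CFml κ n → CFml κ n → CFml κ n
  | ex {κ n : ℕ} : CFml κ (n + 1) → CFml κ n

/-- Satisfaction of such a formula in the structure whose domain is the class `D`,
with class predicates interpreted by `Γ` and variable assignment `v`. -/
def SatC (D : Set ZFSet) : ∀ {κ n : ℕ}, (Fin κ → Set ZFSet) → CFml κ n → (Fin n → ZFSet) → Prop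
  | _, _, _, .mem i j, v => v i ∈ v j
  | _, _, _, .eq i j, v => v i = v j
  | _, _, Γ, .cls X i, v => v i ∈ Γ X
  | _, _, Γ, .not φ, v => ¬ SatC D Γ φ v
  | _, _, Γ, .or φ ψ, v => SatC D Γ φ v ∨ SatC D Γ ψ v
  | _, _, Γ, .ex φ, v => ∃ x ∈ D, SatC D Γ φ (Fin.snoc v x)

/-- Pure ∈-formulas with `n` free variables. -/
abbrev Fml (n : ℕ) : Type := CFml 0 n

/-- Satisfaction of an ∈-formula in `(M, ∈)` (quantifiers relativized to `M`). -/
def Sat (M : ZFSet) {n : ℕ} (φ : Fml n) (v : Fin n → ZFSet) : Prop :=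
  SatC M.toSet (fun i => i.elim0) φ v

/-- A `k`-ary relation on `M` is definable (with parameters) over `(M, ∈)`. -/
def DefinableOver (M : ZFSet) {k : ℕ} (S : (Fin k → ZFSet) → Prop) : Prop :=
  ∃ (m : ℕ) (φ : Fml (k + m)) (a : Fin m → ZFSet), (∀ i, a i ∈ M) ∧
    ∀ v : Fin k → ZFSet, (∀ i, v i ∈ M) → (S v ↔ Sat M φ (Fin.append v a))

/-- The collection of classes of `M` that are definable over `(M,∈)` with parameters. -/
def DefClasses (M : ZFSet) : Set (Set ZFSet) :=
  {S | S ⊆ M.toSet ∧ DefinableOver M (fun v : Fin 1 → ZFSet => v 0 ∈ S)}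

/-- `M` is a countable transitive model of `ZF⁻` (`ZF` without the power set axiom,
with Collection instead of Replacement), stated semantically via
the closure conditions that satisfaction of the `ZF⁻`-axioms imposes on a
transitive set (Foundation is automatic for transitive sets). -/
structure IsCTM (M : ZFSet) : Prop where
  countable : M.toSet.Countable
  transitive : M.IsTransitive
  empty_mem : (∅ : ZFSet) ∈ M
  pairing : ∀ x ∈ M, ∀ y ∈ M, ({x, y} : ZFSet) ∈ M
  union : ∀ x ∈ M, (ZFSet.sUnion x : ZFSet) ∈ M
  infinity : ZFSet.omega ∈ M
  separation : ∀ (m : ℕ) (φ : Fml (m + 1)) (a : Fin m → ZFSet), (∀ i, a i ∈ M) →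
    ∀ x ∈ M, ZFSet.sep (fun y => Sat M φ (Fin.snoc a y)) x ∈ M
  collection : ∀ (m : ℕ) (φ : Fml (m + 2)) (a : Fin m → ZFSet), (∀ i, a i ∈ M) →
    ∀ x ∈ M, (∀ y ∈ x, ∃ z ∈ M, Sat M φ (Fin.snoc (Fin.snoc a y) z)) →
      ∃ b ∈ M, ∀ y ∈ x, ∃ z ∈ b, Sat M φ (Fin.snoc (Fin.snoc a y) z)

/-- `x` is a (von Neumann) ordinal. -/
def IsOrdZ (x : ZFSet) : Prop := x.IsTransitive ∧ ∀ y ∈ x, ZFSet.IsTransitive y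

/-- `α` is an ordinal of the model `M`. -/
def IsOrdIn (M α : ZFSet) : Prop := α ∈ M ∧ IsOrdZ α
/-- A notion of (class) forcing for `(M, C)`: a preorder whose domain and order
relation are classes in `C` and whose conditions are elements of `M`, with a
maximal element `one`. For the first-order setting of a partial order definable
over a model `M` of `ZF⁻`, take `C = DefClasses M`. -/
structure ClassForcing (M : ZFSet) (C : Set (Set ZFSet)) where
  P : Set ZFSet
  le : ZFSet → ZFSet → Prop
  P_subM : ∀ p ∈ P, p ∈ M
  P_mem : P ∈ C
  le_mem : {x : ZFSet | ∃ p ∈ P, ∃ q ∈ P, le p q ∧ x = ZFSet.pair p q} ∈ C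
  le_refl : ∀ p ∈ P, le p p
  le_trans : ∀ p ∈ P, ∀ q ∈ P, ∀ r ∈ P, le p q → le q r → le p r
  one : ZFSet
  one_mem : one ∈ P
  le_one : ∀ p ∈ P, le p one

variable {M : ZFSet} {C : Set (Set ZFSet)}

/-- `p` and `q` are compatible in `F`. -/
def Compat (F : ClassForcing M C) (p q : ZFSet) : Prop :=
  ∃ r ∈ F.P, F.le r p ∧ F.le r q

/-- `F` is antisymmetric, i.e. an actual partial order. -/
def Antisymmetric (F : ClassForcing M C) : Prop :=
  ∀ p ∈ F.P, ∀ q ∈ F.P, F.le p q → F.le q p → p = q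

/-- `F` is separative. -/
def Separative (F : ClassForcing M C) : Prop :=
  ∀ p ∈ F.P, ∀ q ∈ F.P, ¬ F.le p q → ∃ r ∈ F.P, F.le r p ∧ ¬ Compat F r q

/-- `σ` is a `P`-name: every element of `σ` is a pair `⟨τ, p⟩` where `τ` is a
`P`-name and `p ∈ P`. -/
inductive IsName (P : Set ZFSet) : ZFSet → Prop
  | intro (σ : ZFSet)
      (hshape : ∀ x ∈ σ, ∃ τ p, p ∈ P ∧ x = ZFSet.pair τ p)
      (hrec : ∀ τ p : ZFSet, ZFSet.pair τ p ∈ σ → IsName P τ) : IsName P σ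

theorem transGen_mem_of_pair_mem {τ p σ : ZFSet} (h : ZFSet.pair τ p ∈ σ) :
    Relation.TransGen (· ∈ ·) τ σ := by
  have h1 : τ ∈ ({τ, p} : ZFSet) := by simp
  have h2 : ({τ, p} : ZFSet) ∈ ZFSet.pair τ p := by simp [ZFSet.pair]
  exact Relation.TransGen.tail (Relation.TransGen.tail (Relation.TransGen.single h1) h2) h

/-- The evaluation `σ^G = {τ^G ∣ ∃ p ∈ G, ⟨τ,p⟩ ∈ σ}` of a name by a filter `G`
(defined by recursion on the transitive closure of `∈`; note that any `τ` with
`⟨τ,p⟩ ∈ σ` satisfies `τ ∈ ⋃₀ ⋃₀ σ`). -/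
noncomputable def val (G : Set ZFSet) : ZFSet → ZFSet :=
  WellFounded.fix (ZFSet.mem_wf.transGen) fun σ ih =>
    @ZFSet.image
      (fun τ => if h : Relation.TransGen (· ∈ ·) τ σ then ih τ h else ∅)
      (Classical.allZFSetDefinable _)
      (ZFSet.sep (fun τ => ∃ p ∈ G, ZFSet.pair τ p ∈ σ) (ZFSet.sUnion (ZFSet.sUnion σ : ZFSet) : ZFSet))

/-- `D` is dense in the forcing `(P, ≤)`. -/
def DenseIn (P : Set ZFSet) (le : ZFSet → ZFSet → Prop) (D : Set ZFSet) : Prop :=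
  ∀ p ∈ P, ∃ q ∈ D, q ∈ P ∧ le q p

/-- `G` is a filter on `(P, ≤)` which is generic over `(M, C)`, i.e. it meets every
dense subclass of `P` lying in `C`. -/
structure IsGenericRaw (M : ZFSet) (C : Set (Set ZFSet)) (P : Set ZFSet)
    (le : ZFSet → ZFSet → Prop) (G : Set ZFSet) : Prop where
  sub : G ⊆ P
  upward : ∀ p ∈ G, ∀ q ∈ P, le p q → q ∈ G
  compat : ∀ p ∈ G, ∀ q ∈ G, ∃ r ∈ G, le r p ∧ le r q
  meets : ∀ D ∈ C, D ⊆ P → DenseIn P le D → (D ∩ G).Nonempty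

/-- `G` is `F`-generic over `(M, C)`. -/
def IsGeneric (F : ClassForcing M C) (G : Set ZFSet) : Prop :=
  IsGenericRaw M C F.P F.le G

/-- The generic extension `M[G] = {σ^G ∣ σ ∈ M^P}` as a class. -/
def MG (M : ZFSet) (P : Set ZFSet) (G : Set ZFSet) : Set ZFSet :=
  {x | ∃ σ, σ ∈ M ∧ IsName P σ ∧ x = val G σ}

/-- `Γ` is a class `P`-name over `(M, C)`. -/
def IsClassName (M : ZFSet) (C : Set (Set ZFSet)) (P : Set ZFSet) (Γ : Set ZFSet) : Prop :=
  Γ ∈ C ∧ ∀ x ∈ Γ, ∃ τ p, τ ∈ M ∧ IsName P τ ∧ p ∈ P ∧ x = ZFSet.pair τ p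

/-- Evaluation `Γ^G` of a class name. -/
def classVal (G : Set ZFSet) (Γ : Set ZFSet) : Set ZFSet :=
  {x | ∃ τ p, p ∈ G ∧ ZFSet.pair τ p ∈ Γ ∧ x = val G τ}

/-- Encoding of a tuple of sets as a single set (iterated Kuratowski pairs). -/
def tupleZF : ∀ {k : ℕ}, (Fin k → ZFSet) → ZFSet
  | 0, _ => ∅
  | _ + 1, v => ZFSet.pair (v 0) (tupleZF (fun i => v i.succ))

/-- `p ⊩ φ(σ⃗)` (with class-name parameters `Γ⃗`): for every `F`-generic filter `G`
over `(M, C)` with `p ∈ G`, `φ(σ⃗^G)` holds in `(M[G], ∈, Γ⃗^G)`. -/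
def Forces (F : ClassForcing M C) {κ n : ℕ} (φ : CFml κ n)
    (Γ : Fin κ → Set ZFSet) (p : ZFSet) (σ : Fin n → ZFSet) : Prop :=
  ∀ G : Set ZFSet, IsGeneric F G → p ∈ G →
    SatC (MG M F.P G) (fun i => classVal G (Γ i)) φ (fun i => val G (σ i))

/-- The definability lemma for `φ` over `(M, C)`: for all class-name parameters,
the class of tuples `⟨p, σ⃗⟩` such that `p ⊩ φ(σ⃗)` is in `C`. -/
def DefLemma (F : ClassForcing M C) {κ n : ℕ} (φ : CFml κ n) : Prop :=
  ∀ Γ : Fin κ → Set ZFSet, (∀ i, IsClassName M C F.P (Γ i)) →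
    {x : ZFSet | ∃ p ∈ F.P, ∃ σ : Fin n → ZFSet,
      (∀ i, σ i ∈ M ∧ IsName F.P (σ i)) ∧ Forces F φ Γ p σ ∧
      x = ZFSet.pair p (tupleZF σ)} ∈ C

/-- The truth lemma for `φ` over `(M, C)`: everything true in a generic extension
is forced by some condition in the generic filter. -/
def TruthLemma (F : ClassForcing M C) {κ n : ℕ} (φ : CFml κ n) : Prop :=
  ∀ Γ : Fin κ → Set ZFSet, (∀ i, IsClassName M C F.P (Γ i)) →
    ∀ σ : Fin n → ZFSet, (∀ i, σ i ∈ M ∧ IsName F.P (σ i)) →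
      ∀ G : Set ZFSet, IsGeneric F G →
        SatC (MG M F.P G) (fun i => classVal G (Γ i)) φ (fun i => val G (σ i)) →
        ∃ p ∈ G, Forces F φ Γ p σ

/-- The forcing theorem for `φ` over `(M, C)`. -/
def ForcingThm (F : ClassForcing M C) {κ n : ℕ} (φ : CFml κ n) : Prop :=
  DefLemma F φ ∧ TruthLemma F φ
/-- A (class) Boolean algebra over `(M, C)`: domain a class in `C` of elements
of `M`, with all operations given by classes in `C` (in the first-order setting
`C = DefClasses M`, this says domain and operations are definable over `M`). -/
structure MBoolAlg (M : ZFSet) (C : Set (Set ZFSet)) where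
  B : Set ZFSet
  le : ZFSet → ZFSet → Prop
  bot : ZFSet
  top : ZFSet
  neg : ZFSet → ZFSet
  inf : ZFSet → ZFSet → ZFSet
  sup : ZFSet → ZFSet → ZFSet
  B_subM : ∀ b ∈ B, b ∈ M
  B_mem : B ∈ C
  le_mem : {x : ZFSet | ∃ a ∈ B, ∃ b ∈ B, le a b ∧ x = ZFSet.pair a b} ∈ C
  neg_mem : {x : ZFSet | ∃ a ∈ B, x = ZFSet.pair a (neg a)} ∈ C
  inf_mem : {x : ZFSet | ∃ a ∈ B, ∃ b ∈ B, x = ZFSet.pair (ZFSet.pair a b) (inf a b)} ∈ C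
  sup_mem : {x : ZFSet | ∃ a ∈ B, ∃ b ∈ B, x = ZFSet.pair (ZFSet.pair a b) (sup a b)} ∈ C
  bot_mem : bot ∈ B
  top_mem : top ∈ B
  neg_cl : ∀ a ∈ B, neg a ∈ B
  inf_cl : ∀ a ∈ B, ∀ b ∈ B, inf a b ∈ B
  sup_cl : ∀ a ∈ B, ∀ b ∈ B, sup a b ∈ B
  le_refl : ∀ a ∈ B, le a a
  le_trans : ∀ a ∈ B, ∀ b ∈ B, ∀ c ∈ B, le a b → le b c → le a c
  le_antisymm : ∀ a ∈ B, ∀ b ∈ B, le a b → le b a → a = b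
  bot_le : ∀ a ∈ B, le bot a
  le_top : ∀ a ∈ B, le a top
  inf_le_left : ∀ a ∈ B, ∀ b ∈ B, le (inf a b) a
  inf_le_right : ∀ a ∈ B, ∀ b ∈ B, le (inf a b) b
  le_inf : ∀ a ∈ B, ∀ b ∈ B, ∀ c ∈ B, le c a → le c b → le c (inf a b)
  le_sup_left : ∀ a ∈ B, ∀ b ∈ B, le a (sup a b)
  le_sup_right : ∀ a ∈ B, ∀ b ∈ B, le b (sup a b)
  sup_le : ∀ a ∈ B, ∀ b ∈ B, ∀ c ∈ B, le a c → le b c → le (sup a b) c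
  inf_neg : ∀ a ∈ B, inf a (neg a) = bot
  sup_neg : ∀ a ∈ B, sup a (neg a) = top
  distrib : ∀ a ∈ B, ∀ b ∈ B, ∀ c ∈ B, inf a (sup b c) = sup (inf a b) (inf a c)

/-- `Bo` is `M`-complete: every subset of `B` which is an element of `M` has a
supremum in `Bo`. -/
def MComplete {M : ZFSet} {C : Set (Set ZFSet)} (Bo : MBoolAlg M C) : Prop :=
  ∀ A : ZFSet, A ∈ M → (∀ a ∈ A, a ∈ Bo.B) →
    ∃ s ∈ Bo.B, (∀ a ∈ A, Bo.le a s) ∧ ∀ b ∈ Bo.B, (∀ a ∈ A, Bo.le a b) → Bo.le s b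

/-- `(Bo, π)` is a Boolean completion of the forcing `F` over `(M, C)`: `Bo` is an
`M`-complete Boolean algebra (with domain and operations classes of `C`) and `π` is
an injective dense embedding of `F` into `Bo ∖ {0}` whose graph is a class in `C`. -/
structure BoolCompletion {M : ZFSet} {C : Set (Set ZFSet)} (F : ClassForcing M C)
    (Bo : MBoolAlg M C) (π : ZFSet → ZFSet) : Prop where
  complete : MComplete Bo
  graph_mem : {x : ZFSet | ∃ p ∈ F.P, x = ZFSet.pair p (π p)} ∈ C
  maps : ∀ p ∈ F.P, π p ∈ Bo.B ∧ π p ≠ Bo.bot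
  inj : ∀ p ∈ F.P, ∀ q ∈ F.P, π p = π q → p = q
  mono : ∀ p ∈ F.P, ∀ q ∈ F.P, F.le p q → Bo.le (π p) (π q)
  incompat : ∀ p ∈ F.P, ∀ q ∈ F.P, ¬ Compat F p q → Bo.inf (π p) (π q) = Bo.bot
  dense : ∀ b ∈ Bo.B, b ≠ Bo.bot → ∃ p ∈ F.P, Bo.le (π p) b

/-- `F` has a Boolean completion over `(M, C)`. -/
def HasBoolCompletion {M : ZFSet} {C : Set (Set ZFSet)} (F : ClassForcing M C) : Prop :=
  ∃ (Bo : MBoolAlg M C) (π : ZFSet → ZFSet), BoolCompletion F Bo π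

/-- An isomorphism (in `V`) between two Boolean completions of `F` which fixes `ℙ`,
i.e. commutes with the two dense embeddings. -/
def FixingIso {M : ZFSet} {C : Set (Set ZFSet)} (F : ClassForcing M C)
    (B0 B1 : MBoolAlg M C) (π0 π1 : ZFSet → ZFSet) : Prop :=
  ∃ f : ZFSet → ZFSet,
    (∀ a ∈ B0.B, f a ∈ B1.B) ∧
    (∀ a ∈ B0.B, ∀ b ∈ B0.B, f a = f b → a = b) ∧
    (∀ b ∈ B1.B, ∃ a ∈ B0.B, f a = b) ∧
    (∀ a ∈ B0.B, ∀ b ∈ B0.B, (B0.le a b ↔ B1.le (f a) (f b))) ∧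
    (∀ p ∈ F.P, f (π0 p) = π1 p)

/-- The power set axiom holds in the transitive model `M`. -/
def PowerSetAx (M : ZFSet) : Prop :=
  ∀ x ∈ M, ∃ y ∈ M, ∀ z ∈ M, (z ∈ y ↔ z ⊆ x)

/-- There is a well-ordering of `M` that is definable over `M`. -/
def HasDefWellOrder (M : ZFSet) : Prop :=
  ∃ W : ZFSet → ZFSet → Prop,
    DefinableOver M (fun v : Fin 2 → ZFSet => W (v 0) (v 1)) ∧
    (∀ x ∈ M, ¬ W x x) ∧
    (∀ x ∈ M, ∀ y ∈ M, ∀ z ∈ M, W x y → W y z → W x z) ∧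
    (∀ x ∈ M, ∀ y ∈ M, x ≠ y → (W x y ∨ W y x)) ∧
    (∀ S : Set ZFSet, S ⊆ M.toSet → S.Nonempty → ∃ m ∈ S, ∀ y ∈ S, y ≠ m → ¬ W y m)
/-- There is a global well-order of `M` of order type `Ord^M` that is definable
over `M`: a definable well-ordering of `M` all of whose proper initial segments
are elements of `M`. -/
def HasDefWellOrderOT (M : ZFSet) : Prop :=
  ∃ W : ZFSet → ZFSet → Prop,
    DefinableOver M (fun v : Fin 2 → ZFSet => W (v 0) (v 1)) ∧
    (∀ x ∈ M, ¬ W x x) ∧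
    (∀ x ∈ M, ∀ y ∈ M, ∀ z ∈ M, W x y → W y z → W x z) ∧
    (∀ x ∈ M, ∀ y ∈ M, x ≠ y → (W x y ∨ W y x)) ∧
    (∀ S : Set ZFSet, S ⊆ M.toSet → S.Nonempty → ∃ m ∈ S, ∀ y ∈ S, y ≠ m → ¬ W y m) ∧
    (∀ x ∈ M, ∃ s, s ∈ M ∧ ∀ y : ZFSet, (y ∈ s ↔ (y ∈ M ∧ W y x)))


/-!
Take for `ℙ` all of `M`, ordered as an antichain below the weakest condition `∅`. An
`M`-complete algebra of subclasses of `M ∖ {∅}` containing all singletons is a Boolean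
completion of `ℙ` via `p ↦ {p}`. One such algebra consists of the classes that are, relative
to `M ∖ {∅}`, sets or complements of sets of `M`. A second one also contains the class `A` of
the elements containing `∅`: its members are the unions `X ∪ Y` where `X` is a relative set
or co-set of `A` and `Y` one of `M ∖ ({∅} ∪ A)`. An isomorphism fixing `ℙ` preserves which
singletons lie below an element, so it maps every class to itself. But `A` is neither a
relative set nor a relative co-set of `M ∖ {∅}`: for `a ∈ M`, `{∅, {a}} ∈ A ∖ a` and
`{{a}} ∉ A ∪ a`.
-/

/-! ### A calculus of definable relations -/

def ren : ∀ {κ n m : ℕ}, (Fin n → Fin m) → CFml κ n → CFml κ m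
  | _, _, _, f, .mem i j => .mem (f i) (f j)
  | _, _, _, f, .eq i j => .eq (f i) (f j)
  | _, _, _, f, .cls X i => .cls X (f i)
  | _, _, _, f, .not φ => .not (ren f φ)
  | _, _, _, f, .or φ ψ => .or (ren f φ) (ren f ψ)
  | _, _, _, f, .ex φ => .ex (ren (Fin.snoc (fun j => (f j).castSucc) (Fin.last _)) φ)

theorem satC_ren {D : Set ZFSet} {κ : ℕ} {Γ : Fin κ → Set ZFSet} {n m : ℕ} (φ : CFml κ n)
    (f : Fin n → Fin m) (v : Fin m → ZFSet) :
    SatC D Γ (ren f φ) v ↔ SatC D Γ φ (v ∘ f) := by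
  induction φ generalizing m with
  | mem | eq | cls => simp only [ren, SatC, Function.comp]
  | not φ ih => simp only [ren, SatC, ih]
  | or φ ψ ih₁ ih₂ => simp only [ren, SatC, ih₁, ih₂]
  | ex φ ih =>
    have e : ∀ x, Fin.snoc v x ∘ Fin.snoc (fun j => (f j).castSucc) (Fin.last m) =
        Fin.snoc (v ∘ f) x := fun x => funext fun i => by
      refine Fin.lastCases ?_ (fun j => ?_) i <;> simp
    simp only [ren, SatC, ih, e]

namespace DefinableOver

theorem congr {k : ℕ} {S T : (Fin k → ZFSet) → Prop} (hS : DefinableOver M S)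
    (h : ∀ v, (∀ i, v i ∈ M) → (S v ↔ T v)) : DefinableOver M T := by
  obtain ⟨m, φ, a, ha, hφ⟩ := hS
  exact ⟨m, φ, a, ha, fun v hv => (h v hv).symm.trans (hφ v hv)⟩

theorem comp {k l : ℕ} {S : (Fin k → ZFSet) → Prop} (hS : DefinableOver M S)
    (σ : Fin k → Fin l) :
    DefinableOver M fun v : Fin l → ZFSet => S (fun i => v (σ i)) := by
  obtain ⟨m, φ, a, ha, hφ⟩ := hS
  refine ⟨m, ren (Fin.append (fun i => Fin.castAdd m (σ i)) (Fin.natAdd l)) φ, a, ha,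
    fun v hv => ?_⟩
  have e : Fin.append v a ∘ Fin.append (fun i => Fin.castAdd m (σ i)) (Fin.natAdd l) =
      Fin.append (fun i => v (σ i)) a := funext fun i => by
    induction i using Fin.addCases <;> simp
  simp only [Sat, satC_ren, e]
  exact hφ _ fun i => hv (σ i)

theorem not {k : ℕ} {S : (Fin k → ZFSet) → Prop} (hS : DefinableOver M S) :
    DefinableOver M fun v => ¬ S v := by
  obtain ⟨m, φ, a, ha, hφ⟩ := hS
  refine ⟨m, .not φ, a, ha, fun v hv => ?_⟩
  simp only [Sat, SatC]
  exact not_congr (hφ v hv)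

theorem or {k : ℕ} {S T : (Fin k → ZFSet) → Prop} (hS : DefinableOver M S)
    (hT : DefinableOver M T) : DefinableOver M fun v => S v ∨ T v := by
  obtain ⟨m₁, φ₁, a₁, ha₁, h₁⟩ := hS
  obtain ⟨m₂, φ₂, a₂, ha₂, h₂⟩ := hT
  let inl : Fin (k + m₁) → Fin (k + (m₁ + m₂)) :=
    Fin.append (Fin.castAdd _) fun j => Fin.natAdd k (Fin.castAdd m₂ j)
  let inr : Fin (k + m₂) → Fin (k + (m₁ + m₂)) :=
    Fin.append (Fin.castAdd _) fun j => Fin.natAdd k (Fin.natAdd m₁ j)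
  refine ⟨m₁ + m₂, .or (ren inl φ₁) (ren inr φ₂), Fin.append a₁ a₂, fun i => ?_,
    fun v hv => ?_⟩
  · induction i using Fin.addCases <;> simp [ha₁, ha₂]
  · have e₁ : Fin.append v (Fin.append a₁ a₂) ∘ inl = Fin.append v a₁ :=
      funext fun i => by induction i using Fin.addCases <;> simp [inl]
    have e₂ : Fin.append v (Fin.append a₁ a₂) ∘ inr = Fin.append v a₂ :=
      funext fun i => by induction i using Fin.addCases <;> simp [inr]
    simp only [Sat, SatC, satC_ren, e₁, e₂]
    exact or_congr (h₁ v hv) (h₂ v hv)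

theorem and {k : ℕ} {S T : (Fin k → ZFSet) → Prop} (hS : DefinableOver M S)
    (hT : DefinableOver M T) : DefinableOver M fun v => S v ∧ T v :=
  (hS.not.or hT.not).not.congr fun _ _ => by tauto

theorem imp {k : ℕ} {S T : (Fin k → ZFSet) → Prop} (hS : DefinableOver M S)
    (hT : DefinableOver M T) : DefinableOver M fun v => S v → T v :=
  (hS.not.or hT).congr fun _ _ => imp_iff_not_or.symm

theorem iff {k : ℕ} {S T : (Fin k → ZFSet) → Prop} (hS : DefinableOver M S)
    (hT : DefinableOver M T) : DefinableOver M fun v => (S v ↔ T v) :=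
  ((hS.imp hT).and (hT.imp hS)).congr fun _ _ => iff_iff_implies_and_implies.symm

theorem exists_mem {k : ℕ} {S : (Fin (k + 1) → ZFSet) → Prop} (hS : DefinableOver M S) :
    DefinableOver M fun v : Fin k → ZFSet => ∃ x, x ∈ M ∧ S (Fin.snoc v x) := by
  obtain ⟨m, φ, a, ha, hφ⟩ := hS
  let σ : Fin (k + 1 + m) → Fin (k + m + 1) :=
    Fin.append (Fin.snoc (fun i => (Fin.castAdd m i).castSucc) (Fin.last _))
      fun j => (Fin.natAdd k j).castSucc
  refine ⟨m, .ex (ren σ φ), a, ha, fun v hv => ?_⟩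
  have e : ∀ x, (Fin.snoc (Fin.append v a) x : Fin (k + m + 1) → ZFSet) ∘ σ =
      Fin.append (Fin.snoc v x) a := fun x => funext fun i => by
    induction i using Fin.addCases with
    | left i => refine Fin.lastCases ?_ (fun j => ?_) i <;> simp [σ]
    | right j => simp only [σ, Function.comp_apply, Fin.append_right, Fin.snoc_castSucc]
  simp only [Sat, SatC, satC_ren, e]
  refine exists_congr fun x => and_congr_right fun hx => hφ _ fun i => ?_
  refine Fin.lastCases ?_ (fun j => ?_) i <;> simp [hx, hv]

theorem forall_mem {k : ℕ} {S : (Fin (k + 1) → ZFSet) → Prop} (hS : DefinableOver M S) :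
    DefinableOver M fun v : Fin k → ZFSet => ∀ x, x ∈ M → S (Fin.snoc v x) :=
  hS.not.exists_mem.not.congr fun _ _ => by simp only [not_exists, not_and, not_not]

theorem snoc_const {k : ℕ} {S : (Fin (k + 1) → ZFSet) → Prop} {c : ZFSet} (hc : c ∈ M)
    (hS : DefinableOver M S) : DefinableOver M fun v : Fin k → ZFSet => S (Fin.snoc v c) := by
  have hc' : DefinableOver M fun v : Fin (k + 1) → ZFSet => v (Fin.last k) = c :=
    ⟨1, .eq (Fin.castAdd 1 (Fin.last k)) (Fin.natAdd _ 0), fun _ => c, fun _ => hc,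
      fun v _ => by simp [Sat, SatC]⟩
  refine (hc'.and hS).exists_mem.congr fun v _ => ?_
  simp only [Fin.snoc_last]
  exact ⟨fun ⟨x, _, hx, h⟩ => hx ▸ h, fun h => ⟨c, hc, rfl, h⟩⟩

end DefinableOver

theorem definableOver_mem {k : ℕ} (i j : Fin k) : DefinableOver M fun v => v i ∈ v j :=
  ⟨0, .mem (Fin.castAdd 0 i) (Fin.castAdd 0 j), Fin.elim0, fun i => i.elim0,
    fun v _ => by simp [Sat, SatC]⟩

theorem definableOver_eq {k : ℕ} (i j : Fin k) : DefinableOver M fun v => v i = v j :=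
  ⟨0, .eq (Fin.castAdd 0 i) (Fin.castAdd 0 j), Fin.elim0, fun i => i.elim0,
    fun v _ => by simp [Sat, SatC]⟩

theorem definableOver_mem_const {k : ℕ} (i : Fin k) {c : ZFSet} (hc : c ∈ M) :
    DefinableOver M fun v => v i ∈ c :=
  (definableOver_mem (Fin.castSucc i) (Fin.last k)).snoc_const hc |>.congr fun v _ => by simp

theorem definableOver_const_mem {k : ℕ} (i : Fin k) {c : ZFSet} (hc : c ∈ M) :
    DefinableOver M fun v => c ∈ v i :=
  (definableOver_mem (Fin.last k) (Fin.castSucc i)).snoc_const hc |>.congr fun v _ => by simp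

theorem definableOver_eq_const {k : ℕ} (i : Fin k) {c : ZFSet} (hc : c ∈ M) :
    DefinableOver M fun v => v i = c :=
  (definableOver_eq (Fin.castSucc i) (Fin.last k)).snoc_const hc |>.congr fun v _ => by simp

/-! ### Closure properties of a countable transitive model -/

theorem singleton_ne_empty (x : ZFSet) : ({x} : ZFSet) ≠ ∅ :=
  fun h => ZFSet.notMem_empty x (h ▸ ZFSet.mem_singleton.2 rfl)

theorem singleton_ne_self (x : ZFSet) : ({x} : ZFSet) ≠ x := fun h => by
  have hx : x ∈ ({x} : ZFSet) := ZFSet.mem_singleton.2 rfl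
  rw [h] at hx
  exact ZFSet.mem_irrefl x hx

theorem mem_asymm₃ {x y z : ZFSet} (h₁ : x ∈ y) (h₂ : y ∈ z) (h₃ : z ∈ x) : False :=
  have h : Relation.TransGen (· ∈ ·) x x := .tail (.tail (.single h₁) h₂) h₃
  ZFSet.mem_wf.transGen.asymmetric _ _ h h

theorem mem_sUnion_sUnion_of_pair_mem {A a b : ZFSet} (h : ZFSet.pair a b ∈ A) :
    a ∈ A.sUnion.sUnion ∧ b ∈ A.sUnion.sUnion :=
  ⟨ZFSet.mem_sUnion_of_mem (ZFSet.mem_singleton.2 rfl)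
      (ZFSet.mem_sUnion_of_mem (by simp [ZFSet.pair]) h),
    ZFSet.mem_sUnion_of_mem (ZFSet.mem_pair.2 (Or.inr rfl))
      (ZFSet.mem_sUnion_of_mem (y := {a, b}) (by simp [ZFSet.pair]) h)⟩

namespace IsCTM

theorem mem_of_mem (hM : IsCTM M) {x y : ZFSet} (hx : x ∈ M) (hy : y ∈ x) : y ∈ M :=
  hM.transitive.mem_trans hy hx

theorem singleton_mem (hM : IsCTM M) {x : ZFSet} (hx : x ∈ M) : ({x} : ZFSet) ∈ M := by
  simpa using hM.pairing x hx x hx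

theorem pair_mem (hM : IsCTM M) {x y : ZFSet} (hx : x ∈ M) (hy : y ∈ M) :
    ZFSet.pair x y ∈ M :=
  hM.pairing _ (hM.singleton_mem hx) _ (hM.pairing x hx y hy)

theorem mem_of_pair_mem (hM : IsCTM M) {x y : ZFSet} (h : ZFSet.pair x y ∈ M) :
    x ∈ M ∧ y ∈ M := by
  have hxy : ({x, y} : ZFSet) ∈ M := hM.mem_of_mem h (by simp [ZFSet.pair])
  exact ⟨hM.mem_of_mem hxy (by simp), hM.mem_of_mem hxy (by simp)⟩

theorem union_mem (hM : IsCTM M) {x y : ZFSet} (hx : x ∈ M) (hy : y ∈ M) : x ∪ y ∈ M :=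
  hM.union _ (hM.pairing x hx y hy)

theorem sep_mem (hM : IsCTM M) {Q : ZFSet → Prop}
    (hQ : DefinableOver M fun v : Fin 1 → ZFSet => Q (v 0))
    {x : ZFSet} (hx : x ∈ M) : ZFSet.sep Q x ∈ M := by
  obtain ⟨m, φ, a, ha, hφ⟩ := hQ
  let ρ : Fin (1 + m) → Fin (m + 1) := Fin.append (fun _ => Fin.last m) Fin.castSucc
  convert hM.separation m (ren ρ φ) a ha x hx using 1
  refine ZFSet.ext fun y => ?_
  simp only [ZFSet.mem_sep, and_congr_right_iff]
  intro hy
  have e : (Fin.snoc a y : Fin (m + 1) → ZFSet) ∘ ρ = Fin.append (fun _ => y) a :=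
    funext fun i => by induction i using Fin.addCases <;> simp [ρ]
  refine (hφ (fun _ => y) fun _ => hM.mem_of_mem hx hy).trans ?_
  rw [Sat, Sat, satC_ren, e]

end IsCTM

theorem definableOver_eq_upair (hM : IsCTM M) {k : ℕ} (i j l : Fin k) :
    DefinableOver M fun v => v i = {v j, v l} := by
  refine ((definableOver_mem (Fin.last k) i.castSucc).iff
    ((definableOver_eq (Fin.last k) j.castSucc).or
      (definableOver_eq (Fin.last k) l.castSucc))).forall_mem.congr fun v hv => ?_
  simp only [Fin.snoc_last, Fin.snoc_castSucc]
  refine ⟨fun h => ZFSet.ext fun x => ⟨fun hx => ZFSet.mem_pair.2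
    ((h x (hM.mem_of_mem (hv i) hx)).1 hx), fun hx => ?_⟩,
    fun h x _ => by rw [h, ZFSet.mem_pair]⟩
  rcases ZFSet.mem_pair.1 hx with rfl | rfl
  exacts [(h _ (hv j)).2 (Or.inl rfl), (h _ (hv l)).2 (Or.inr rfl)]

theorem definableOver_eq_pair (hM : IsCTM M) {k : ℕ} (i j l : Fin k) :
    DefinableOver M fun v => v i = ZFSet.pair (v j) (v l) := by
  let s : Fin (k + 2) := (Fin.last k).castSucc
  let t : Fin (k + 2) := Fin.last (k + 1)
  refine ((definableOver_eq_upair hM s j.castSucc.castSucc j.castSucc.castSucc).and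
    ((definableOver_eq_upair hM t j.castSucc.castSucc l.castSucc.castSucc).and
      (definableOver_eq_upair hM i.castSucc.castSucc s t))).exists_mem.exists_mem.congr
    fun v hv => ?_
  simp only [s, t, Fin.snoc_last, Fin.snoc_castSucc, ZFSet.pair_eq_singleton]
  exact ⟨fun ⟨_, _, _, _, hs, ht, h⟩ => by rw [h, hs, ht, ZFSet.pair],
    fun h => ⟨_, hM.singleton_mem (hv j), _, hM.pairing _ (hv j) _ (hv l), rfl, rfl, h⟩⟩

theorem definableOver_eq_pair_const (hM : IsCTM M) {t : ZFSet} (ht : t ∈ M) {k : ℕ}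
    (i j : Fin k) : DefinableOver M fun v => v i = ZFSet.pair t (v j) :=
  (definableOver_eq_pair hM i.castSucc (Fin.last k) j.castSucc).snoc_const ht
    |>.congr fun v _ => by simp only [Fin.snoc_last, Fin.snoc_castSucc]

theorem mem_defClasses_of_pair (hM : IsCTM M) {R : ZFSet → ZFSet → Prop}
    (hR : DefinableOver M fun v : Fin 2 → ZFSet => R (v 0) (v 1))
    (hRM : ∀ a b, R a b → a ∈ M ∧ b ∈ M) {S : Set ZFSet}
    (hS : ∀ x, x ∈ S ↔ ∃ a b, R a b ∧ x = ZFSet.pair a b) : S ∈ DefClasses M := by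
  refine ⟨fun x hx => ?_, ?_⟩
  · obtain ⟨a, b, hab, rfl⟩ := (hS x).1 hx
    exact hM.pair_mem (hRM a b hab).1 (hRM a b hab).2
  refine ((hR.comp ![1, 2]).and (definableOver_eq_pair hM 0 1 2)).exists_mem.exists_mem.congr
    fun v _ => ?_
  rw [hS]
  exact ⟨fun ⟨a, _, b, _, h⟩ => ⟨a, b, h⟩,
    fun ⟨a, b, hab, h⟩ => ⟨a, (hRM a b hab).1, b, (hRM a b hab).2, hab, h⟩⟩

theorem mem_defClasses_of_triple (hM : IsCTM M) {T : ZFSet → ZFSet → ZFSet → Prop}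
    (hT : DefinableOver M fun v : Fin 3 → ZFSet => T (v 0) (v 1) (v 2))
    (hTM : ∀ a b c, T a b c → a ∈ M ∧ b ∈ M ∧ c ∈ M) {S : Set ZFSet}
    (hS : ∀ x, x ∈ S ↔ ∃ a b c, T a b c ∧ x = ZFSet.pair (ZFSet.pair a b) c) :
    S ∈ DefClasses M := by
  refine mem_defClasses_of_pair hM (R := fun p c => ∃ a b, T a b c ∧ p = ZFSet.pair a b)
    ?_ ?_ fun x => (hS x).trans ?_
  · refine ((hT.comp ![2, 3, 1]).and (definableOver_eq_pair hM 0 2 3)).exists_mem.exists_mem.congr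
      fun v hv => ?_
    refine ⟨fun ⟨a, _, b, _, h⟩ => ⟨a, b, h⟩, fun ⟨a, b, hab, h⟩ => ?_⟩
    have := hTM a b _ hab
    exact ⟨a, this.1, b, this.2.1, hab, h⟩
  · rintro p c ⟨a, b, hab, rfl⟩
    have := hTM a b c hab
    exact ⟨hM.pair_mem this.1 this.2.1, this.2.2⟩
  · exact ⟨fun ⟨a, b, c, h, hx⟩ => ⟨_, c, ⟨a, b, h, rfl⟩, hx⟩,
      fun ⟨_, c, ⟨a, b, h, hp⟩, hx⟩ => ⟨a, b, c, h, hp ▸ hx⟩⟩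

/-! ### Definable algebras of classes -/

structure ClassAlgebra (M : ZFSet) where
  univ : Set ZFSet
  code : Set ZFSet
  den : ZFSet → Set ZFSet
  univ_subset : univ ⊆ M.toSet
  code_subset : code ⊆ M.toSet
  den_subset : ∀ b ∈ code, den b ⊆ univ
  den_injOn : Set.InjOn den code
  exists_compl : ∀ b ∈ code, ∃ c ∈ code, den c = univ \ den b
  exists_singleton : ∀ x ∈ univ, ∃ c ∈ code, den c = {x}
  exists_sUnion : ∀ A ∈ M, (∀ a ∈ A, a ∈ code) →
    ∃ s ∈ code, den s = {x | ∃ a ∈ A, x ∈ den a}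
  univ_definable : DefinableOver M fun v : Fin 1 → ZFSet => v 0 ∈ univ
  code_definable : DefinableOver M fun v : Fin 1 → ZFSet => v 0 ∈ code
  mem_den_definable : DefinableOver M fun v : Fin 2 → ZFSet => v 1 ∈ code ∧ v 0 ∈ den (v 1)

namespace ClassAlgebra

variable (D : ClassAlgebra M)

def IsCoded (X : Set ZFSet) : Prop := ∃ c ∈ D.code, D.den c = X

noncomputable def codeOf (X : Set ZFSet) : ZFSet :=
  if h : D.IsCoded X then h.choose else ∅

variable {D}

theorem codeOf_mem {X : Set ZFSet} (h : D.IsCoded X) : D.codeOf X ∈ D.code := by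
  rw [codeOf, dif_pos h]
  exact h.choose_spec.1

theorem den_codeOf {X : Set ZFSet} (h : D.IsCoded X) : D.den (D.codeOf X) = X := by
  rw [codeOf, dif_pos h]
  exact h.choose_spec.2

theorem den_subset_M {b : ZFSet} (hb : b ∈ D.code) : D.den b ⊆ M.toSet :=
  (D.den_subset b hb).trans D.univ_subset

theorem eq_codeOf_iff {X : Set ZFSet} (h : D.IsCoded X) {r : ZFSet} :
    r = D.codeOf X ↔ r ∈ D.code ∧ ∀ x ∈ M, (x ∈ D.den r ↔ x ∈ X) := by
  refine ⟨fun hr => hr ▸ ⟨codeOf_mem h, fun x _ => by rw [den_codeOf h]⟩,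
    fun ⟨hr, hX⟩ => D.den_injOn hr (codeOf_mem h) ?_⟩
  rw [den_codeOf h]
  ext x
  refine ⟨fun hx => (hX x (den_subset_M hr hx)).1 hx, fun hx => (hX x ?_).2 hx⟩
  rw [← den_codeOf h] at hx
  exact den_subset_M (codeOf_mem h) hx

theorem isCoded_den {b : ZFSet} (hb : b ∈ D.code) : D.IsCoded (D.den b) := ⟨b, hb, rfl⟩

theorem isCoded_compl {X : Set ZFSet} (h : D.IsCoded X) : D.IsCoded (D.univ \ X) := by
  obtain ⟨b, hb, rfl⟩ := h
  exact D.exists_compl b hb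

theorem isCoded_singleton {x : ZFSet} (hx : x ∈ D.univ) : D.IsCoded {x} :=
  D.exists_singleton x hx

theorem isCoded_empty (hM : IsCTM M) : D.IsCoded ∅ := by
  obtain ⟨s, hs, hden⟩ := D.exists_sUnion ∅ hM.empty_mem (by simp)
  exact ⟨s, hs, by simpa using hden⟩

theorem isCoded_univ (hM : IsCTM M) : D.IsCoded D.univ := by
  simpa using isCoded_compl (isCoded_empty (D := D) hM)

theorem isCoded_union (hM : IsCTM M) {X Y : Set ZFSet} (hX : D.IsCoded X) (hY : D.IsCoded Y) :
    D.IsCoded (X ∪ Y) := by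
  obtain ⟨b, hb, rfl⟩ := hX
  obtain ⟨c, hc, rfl⟩ := hY
  obtain ⟨s, hs, hden⟩ := D.exists_sUnion {b, c}
    (hM.pairing b (D.code_subset hb) c (D.code_subset hc)) (by simp [hb, hc])
  refine ⟨s, hs, hden.trans ?_⟩
  ext x
  simp

theorem isCoded_inter (hM : IsCTM M) {X Y : Set ZFSet} (hX : D.IsCoded X) (hY : D.IsCoded Y) :
    D.IsCoded (X ∩ Y) := by
  obtain ⟨b, hb, rfl⟩ := hX
  obtain ⟨c, hc, rfl⟩ := hY
  convert isCoded_compl (isCoded_union hM (isCoded_compl (isCoded_den hb))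
    (isCoded_compl (isCoded_den hc))) using 1
  have := D.den_subset b hb
  ext x
  simp only [Set.mem_inter_iff, Set.mem_sdiff, Set.mem_union]
  tauto

variable (D)

noncomputable def bot : ZFSet := D.codeOf ∅
noncomputable def top : ZFSet := D.codeOf D.univ
noncomputable def neg (b : ZFSet) : ZFSet := D.codeOf (D.univ \ D.den b)
noncomputable def inf (b c : ZFSet) : ZFSet := D.codeOf (D.den b ∩ D.den c)
noncomputable def sup (b c : ZFSet) : ZFSet := D.codeOf (D.den b ∪ D.den c)

variable {D}

theorem bot_mem (hM : IsCTM M) : D.bot ∈ D.code := codeOf_mem (isCoded_empty hM)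
theorem top_mem (hM : IsCTM M) : D.top ∈ D.code := codeOf_mem (isCoded_univ hM)
theorem den_bot (hM : IsCTM M) : D.den D.bot = ∅ := den_codeOf (isCoded_empty hM)
theorem den_top (hM : IsCTM M) : D.den D.top = D.univ := den_codeOf (isCoded_univ hM)

theorem neg_mem {b : ZFSet} (hb : b ∈ D.code) : D.neg b ∈ D.code :=
  codeOf_mem (isCoded_compl (isCoded_den hb))

theorem den_neg {b : ZFSet} (hb : b ∈ D.code) : D.den (D.neg b) = D.univ \ D.den b :=
  den_codeOf (isCoded_compl (isCoded_den hb))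

theorem inf_mem (hM : IsCTM M) {b c : ZFSet} (hb : b ∈ D.code) (hc : c ∈ D.code) :
    D.inf b c ∈ D.code :=
  codeOf_mem (isCoded_inter hM (isCoded_den hb) (isCoded_den hc))

theorem den_inf (hM : IsCTM M) {b c : ZFSet} (hb : b ∈ D.code) (hc : c ∈ D.code) :
    D.den (D.inf b c) = D.den b ∩ D.den c :=
  den_codeOf (isCoded_inter hM (isCoded_den hb) (isCoded_den hc))

theorem sup_mem (hM : IsCTM M) {b c : ZFSet} (hb : b ∈ D.code) (hc : c ∈ D.code) :
    D.sup b c ∈ D.code :=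
  codeOf_mem (isCoded_union hM (isCoded_den hb) (isCoded_den hc))

theorem den_sup (hM : IsCTM M) {b c : ZFSet} (hb : b ∈ D.code) (hc : c ∈ D.code) :
    D.den (D.sup b c) = D.den b ∪ D.den c :=
  den_codeOf (isCoded_union hM (isCoded_den hb) (isCoded_den hc))

variable (D)

theorem definableOver_code {k : ℕ} (i : Fin k) : DefinableOver M fun v => v i ∈ D.code :=
  D.code_definable.comp ![i]

theorem definableOver_univ {k : ℕ} (i : Fin k) : DefinableOver M fun v => v i ∈ D.univ :=
  D.univ_definable.comp ![i]

theorem definableOver_mem_den {k : ℕ} (i j : Fin k) :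
    DefinableOver M fun v => v j ∈ D.code ∧ v i ∈ D.den (v j) :=
  D.mem_den_definable.comp ![i, j]

/-- A code is determined by the class it denotes, so the graph of `v ↦ codeOf (X v)` is
definable from membership in `X v`. -/
theorem definableOver_eq_codeOf {k : ℕ} {Pre : (Fin k → ZFSet) → Prop}
    {X : (Fin k → ZFSet) → Set ZFSet} {Φ : (Fin (k + 1) → ZFSet) → Prop} (i : Fin k)
    (hPre : DefinableOver M Pre) (hΦ : DefinableOver M Φ)
    (hcoded : ∀ v, Pre v → D.IsCoded (X v))
    (hX : ∀ v x, Pre v → (Φ (Fin.snoc v x) ↔ x ∈ X v)) :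
    DefinableOver M fun v => Pre v ∧ v i = D.codeOf (X v) := by
  refine (hPre.and ((D.definableOver_code i).and
    ((D.definableOver_mem_den (Fin.last k) i.castSucc).iff hΦ).forall_mem)).congr
    fun v _ => and_congr_right fun hv => ?_
  rw [eq_codeOf_iff (hcoded v hv)]
  refine and_congr_right fun hc => forall₂_congr fun x _ => ?_
  simp only [Fin.snoc_last, Fin.snoc_castSucc, hc, true_and, hX v x hv]

theorem definableOver_le :
    DefinableOver M fun v : Fin 2 → ZFSet =>
      v 0 ∈ D.code ∧ v 1 ∈ D.code ∧ D.den (v 0) ⊆ D.den (v 1) := by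
  refine ((D.definableOver_code 0).and ((D.definableOver_code 1).and
    ((D.definableOver_mem_den 2 0).imp (D.definableOver_mem_den 2 1)).forall_mem)).congr
    fun v _ => and_congr_right fun h₀ => and_congr_right fun h₁ => ?_
  exact ⟨fun h x hx => (h x (den_subset_M h₀ hx) ⟨h₀, hx⟩).2,
    fun h x _ hx => ⟨h₁, h hx.2⟩⟩

theorem definableOver_eq_neg :
    DefinableOver M fun v : Fin 2 → ZFSet => v 0 ∈ D.code ∧ v 1 = D.neg (v 0) :=
  D.definableOver_eq_codeOf 1 (D.definableOver_code 0)
    ((D.definableOver_univ 2).and (D.definableOver_mem_den 2 0).not)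
    (fun _ hv => isCoded_compl (isCoded_den hv)) fun v x hv => by
      simp [Fin.snoc, hv]

theorem definableOver_eq_inf (hM : IsCTM M) :
    DefinableOver M fun v : Fin 3 → ZFSet =>
      (v 0 ∈ D.code ∧ v 1 ∈ D.code) ∧ v 2 = D.inf (v 0) (v 1) :=
  D.definableOver_eq_codeOf 2 ((D.definableOver_code 0).and (D.definableOver_code 1))
    ((D.definableOver_mem_den 3 0).and (D.definableOver_mem_den 3 1))
    (fun _ hv => isCoded_inter hM (isCoded_den hv.1) (isCoded_den hv.2)) fun v x hv => by
      simp [Fin.snoc, hv]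

theorem definableOver_eq_sup (hM : IsCTM M) :
    DefinableOver M fun v : Fin 3 → ZFSet =>
      (v 0 ∈ D.code ∧ v 1 ∈ D.code) ∧ v 2 = D.sup (v 0) (v 1) :=
  D.definableOver_eq_codeOf 2 ((D.definableOver_code 0).and (D.definableOver_code 1))
    ((D.definableOver_mem_den 3 0).or (D.definableOver_mem_den 3 1))
    (fun _ hv => isCoded_union hM (isCoded_den hv.1) (isCoded_den hv.2)) fun v x hv => by
      simp [Fin.snoc, hv]

noncomputable def toMBoolAlg (hM : IsCTM M) : MBoolAlg M (DefClasses M) where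
  B := D.code
  le b c := D.den b ⊆ D.den c
  bot := D.bot
  top := D.top
  neg := D.neg
  inf := D.inf
  sup := D.sup
  B_subM _ hb := D.code_subset hb
  B_mem := ⟨D.code_subset, D.code_definable⟩
  le_mem := mem_defClasses_of_pair hM
    (R := fun a b => a ∈ D.code ∧ b ∈ D.code ∧ D.den a ⊆ D.den b) D.definableOver_le
    (fun _ _ h => ⟨D.code_subset h.1, D.code_subset h.2.1⟩) fun x => by
      simp [and_assoc]
  neg_mem := mem_defClasses_of_pair hM (R := fun a r => a ∈ D.code ∧ r = D.neg a)
    D.definableOver_eq_neg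
    (fun _ _ h => ⟨D.code_subset h.1, h.2 ▸ D.code_subset (neg_mem h.1)⟩) fun x => by
      simp
  inf_mem := mem_defClasses_of_triple hM
    (T := fun a b r => (a ∈ D.code ∧ b ∈ D.code) ∧ r = D.inf a b)
    (D.definableOver_eq_inf hM)
    (fun _ _ _ h => ⟨D.code_subset h.1.1, D.code_subset h.1.2,
      h.2 ▸ D.code_subset (inf_mem hM h.1.1 h.1.2)⟩) fun x => by
      simp [and_assoc]
  sup_mem := mem_defClasses_of_triple hM
    (T := fun a b r => (a ∈ D.code ∧ b ∈ D.code) ∧ r = D.sup a b)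
    (D.definableOver_eq_sup hM)
    (fun _ _ _ h => ⟨D.code_subset h.1.1, D.code_subset h.1.2,
      h.2 ▸ D.code_subset (sup_mem hM h.1.1 h.1.2)⟩) fun x => by
      simp [and_assoc]
  bot_mem := bot_mem hM
  top_mem := top_mem hM
  neg_cl _ ha := neg_mem ha
  inf_cl _ ha _ hb := inf_mem hM ha hb
  sup_cl _ ha _ hb := sup_mem hM ha hb
  le_refl _ _ := subset_rfl
  le_trans _ _ _ _ _ _ h₁ h₂ := h₁.trans h₂
  le_antisymm _ ha _ hb h₁ h₂ := D.den_injOn ha hb (h₁.antisymm h₂)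
  bot_le _ _ := by rw [den_bot hM]; exact Set.empty_subset _
  le_top _ ha := by rw [den_top hM]; exact D.den_subset _ ha
  inf_le_left _ ha _ hb := by rw [den_inf hM ha hb]; exact Set.inter_subset_left
  inf_le_right _ ha _ hb := by rw [den_inf hM ha hb]; exact Set.inter_subset_right
  le_inf _ ha _ hb _ _ h₁ h₂ := by rw [den_inf hM ha hb]; exact Set.subset_inter h₁ h₂
  le_sup_left _ ha _ hb := by rw [den_sup hM ha hb]; exact Set.subset_union_left
  le_sup_right _ ha _ hb := by rw [den_sup hM ha hb]; exact Set.subset_union_right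
  sup_le _ ha _ hb _ _ h₁ h₂ := by rw [den_sup hM ha hb]; exact Set.union_subset h₁ h₂
  inf_neg _ ha := by rw [inf, den_neg ha, Set.inter_sdiff_self]; rfl
  sup_neg _ ha := by rw [sup, den_neg ha, Set.union_sdiff_cancel (D.den_subset _ ha)]; rfl
  distrib a ha b hb c hc := by
    change D.codeOf (D.den a ∩ D.den (D.sup b c)) =
      D.codeOf (D.den (D.inf a b) ∪ D.den (D.inf a c))
    rw [den_sup hM hb hc, den_inf hM ha hb, den_inf hM ha hc, Set.inter_union_distrib_left]

theorem mComplete (hM : IsCTM M) : MComplete (D.toMBoolAlg hM) := by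
  intro A hA hcodes
  obtain ⟨s, hs, hden⟩ := D.exists_sUnion A hA hcodes
  refine ⟨s, hs, fun a ha x hx => ?_, fun b _ hb x hx => ?_⟩
  · rw [hden]
    exact ⟨a, ha, hx⟩
  · change x ∈ D.den s at hx
    rw [hden] at hx
    obtain ⟨a, ha, hxa⟩ := hx
    exact hb a ha hxa

end ClassAlgebra

/-! ### The antichain forcing and its completions -/

def nonemptyElems (M : ZFSet) : Set ZFSet := {x | x ∈ M ∧ x ≠ ∅}

theorem definableOver_mem_model {k : ℕ} (i : Fin k) : DefinableOver M fun v => v i ∈ M :=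
  (definableOver_eq i i).congr fun _ hv => ⟨fun _ => hv i, fun _ => rfl⟩

def antichainForcing (M : ZFSet) (hM : IsCTM M) : ClassForcing M (DefClasses M) where
  P := M.toSet
  le p q := p = q ∨ q = ∅
  P_subM _ hp := hp
  P_mem := ⟨subset_rfl, definableOver_mem_model 0⟩
  le_mem := mem_defClasses_of_pair hM (R := fun p q => p ∈ M ∧ q ∈ M ∧ (p = q ∨ q = ∅))
    ((definableOver_mem_model 0).and ((definableOver_mem_model 1).and
      ((definableOver_eq 0 1).or (definableOver_eq_const 1 hM.empty_mem))))
    (fun _ _ h => ⟨h.1, h.2.1⟩) fun _ =>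
      ⟨fun ⟨p, hp, q, hq, h, hx⟩ => ⟨p, q, ⟨hp, hq, h⟩, hx⟩,
        fun ⟨p, q, ⟨hp, hq, h⟩, hx⟩ => ⟨p, hp, q, hq, h, hx⟩⟩
  le_refl _ _ := Or.inl rfl
  le_trans _ _ _ _ _ _ h₁ h₂ := by
    rcases h₂ with rfl | rfl
    exacts [h₁, Or.inr rfl]
  one := ∅
  one_mem := hM.empty_mem
  le_one _ _ := Or.inr rfl

theorem ne_of_not_compat_antichainForcing (hM : IsCTM M) {p q : ZFSet} (hp : p ∈ M)
    (hq : q ∈ M) (h : ¬ Compat (antichainForcing M hM) p q) :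
    p ≠ q ∧ p ≠ ∅ ∧ q ≠ ∅ := by
  refine ⟨?_, ?_, ?_⟩ <;> rintro rfl
  exacts [h ⟨p, hp, Or.inl rfl, Or.inl rfl⟩, h ⟨q, hq, Or.inr rfl, Or.inl rfl⟩,
    h ⟨p, hp, Or.inl rfl, Or.inr rfl⟩]

namespace ClassAlgebra

variable (D : ClassAlgebra M)

noncomputable def embed (p : ZFSet) : ZFSet := D.codeOf (if p = ∅ then D.univ else {p})

variable {D}

theorem isCoded_embed (hM : IsCTM M) (hU : D.univ = nonemptyElems M) {p : ZFSet} (hp : p ∈ M) :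
    D.IsCoded (if p = ∅ then D.univ else {p}) := by
  split_ifs with h
  · exact isCoded_univ hM
  · exact isCoded_singleton (hU ▸ ⟨hp, h⟩)

theorem embed_mem (hM : IsCTM M) (hU : D.univ = nonemptyElems M) {p : ZFSet} (hp : p ∈ M) :
    D.embed p ∈ D.code :=
  codeOf_mem (isCoded_embed hM hU hp)

theorem den_embed (hM : IsCTM M) (hU : D.univ = nonemptyElems M) {p : ZFSet} (hp : p ∈ M) :
    D.den (D.embed p) = if p = ∅ then D.univ else {p} :=
  den_codeOf (isCoded_embed hM hU hp)

theorem den_embed_of_ne (hM : IsCTM M) (hU : D.univ = nonemptyElems M) {p : ZFSet}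
    (hp : p ∈ M) (hne : p ≠ ∅) : D.den (D.embed p) = {p} := by
  rw [den_embed hM hU hp, if_neg hne]

theorem singleton_mem_univ (hM : IsCTM M) (hU : D.univ = nonemptyElems M) {p : ZFSet}
    (hp : p ∈ M) : {p} ∈ D.univ :=
  hU ▸ ⟨hM.singleton_mem hp, singleton_ne_empty p⟩

theorem eq_bot_of_den_eq_empty (hM : IsCTM M) {b : ZFSet} (hb : b ∈ D.code)
    (h : D.den b = ∅) : b = D.bot :=
  D.den_injOn hb (bot_mem hM) (h.trans (den_bot hM).symm)

theorem definableOver_eq_embed (hM : IsCTM M) (hU : D.univ = nonemptyElems M) :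
    DefinableOver M fun v : Fin 2 → ZFSet => v 0 ∈ M ∧ v 1 = D.embed (v 0) :=
  D.definableOver_eq_codeOf 1 (definableOver_mem_model 0)
    (((definableOver_eq_const 0 hM.empty_mem).and (D.definableOver_univ 2)).or
      ((definableOver_eq_const 0 hM.empty_mem).not.and (definableOver_eq 2 0)))
    (fun _ hv => isCoded_embed hM hU hv) fun _ x _ => by
      split_ifs with h <;> simp [Fin.snoc, h]

theorem boolCompletion (hM : IsCTM M) (hU : D.univ = nonemptyElems M) :
    BoolCompletion (antichainForcing M hM) (D.toMBoolAlg hM) D.embed where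
  complete := D.mComplete hM
  graph_mem := mem_defClasses_of_pair hM (R := fun p r => p ∈ M ∧ r = D.embed p)
    (definableOver_eq_embed hM hU)
    (fun _ _ h => ⟨h.1, h.2 ▸ D.code_subset (embed_mem hM hU h.1)⟩) fun _ =>
      ⟨fun ⟨p, hp, hx⟩ => ⟨p, _, ⟨hp, rfl⟩, hx⟩,
        fun ⟨p, _, ⟨hp, hr⟩, hx⟩ => ⟨p, hp, hr ▸ hx⟩⟩
  maps p hp := by
    refine ⟨embed_mem hM hU hp, fun (h : D.embed p = D.bot) => ?_⟩
    have hden := den_embed hM hU hp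
    rw [h, den_bot hM] at hden
    split_ifs at hden with hne
    · exact (hden ▸ singleton_mem_univ hM hU hM.empty_mem : {∅} ∈ (∅ : Set ZFSet))
    · exact (Set.singleton_ne_empty p) hden.symm
  inj p hp q hq h := by
    have hden := congrArg D.den h
    rw [den_embed hM hU hp, den_embed hM hU hq] at hden
    split_ifs at hden with hp' hq' hq'
    · rw [hp', hq']
    · have h := singleton_mem_univ hM hU hq
      rw [hden] at h
      exact (singleton_ne_self q h).elim
    · have h := singleton_mem_univ hM hU hp
      rw [← hden] at h
      exact (singleton_ne_self p h).elim
    · exact Set.singleton_injective hden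
  mono p hp q hq h := by
    rcases h with rfl | rfl
    · exact subset_rfl
    · change D.den (D.embed p) ⊆ D.den (D.embed ∅)
      rw [den_embed hM hU hq, if_pos rfl]
      exact D.den_subset _ (embed_mem hM hU hp)
  incompat p hp q hq h := by
    obtain ⟨hpq, hp', hq'⟩ := ne_of_not_compat_antichainForcing hM hp hq h
    have hpi := embed_mem hM hU hp
    have hqi := embed_mem hM hU hq
    change D.inf _ _ = D.bot
    refine eq_bot_of_den_eq_empty hM (inf_mem hM hpi hqi) ?_
    rw [den_inf hM hpi hqi, den_embed_of_ne hM hU hp hp', den_embed_of_ne hM hU hq hq']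
    exact Set.singleton_inter_eq_empty.2 hpq
  dense b hb hne := by
    obtain ⟨x, hx⟩ := Set.nonempty_iff_ne_empty.2 fun h => hne (eq_bot_of_den_eq_empty hM hb h)
    have hxU : x ∈ nonemptyElems M := hU ▸ D.den_subset b hb hx
    refine ⟨x, hxU.1, ?_⟩
    change D.den (D.embed x) ⊆ D.den b
    rw [den_embed_of_ne hM hU hxU.1 hxU.2]
    exact Set.singleton_subset_iff.2 hx

theorem exists_den_eq_of_fixingIso (hM : IsCTM M) {D' : ClassAlgebra M}
    (hU : D.univ = nonemptyElems M) (hU' : D'.univ = nonemptyElems M)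
    (h : FixingIso (antichainForcing M hM) (D.toMBoolAlg hM) (D'.toMBoolAlg hM) D.embed D'.embed)
    {b : ZFSet} (hb : b ∈ D'.code) : ∃ a ∈ D.code, D.den a = D'.den b := by
  obtain ⟨f, -, -, hsurj, hle, hfix⟩ := h
  obtain ⟨a, ha, rfl⟩ := hsurj b hb
  have key : ∀ p ∈ nonemptyElems M, p ∈ D.den a ↔ p ∈ D'.den (f a) := fun p hp => by
    have := hle _ (embed_mem hM hU hp.1) a ha
    change D.den (D.embed p) ⊆ D.den a ↔ D'.den (f (D.embed p)) ⊆ D'.den (f a) at this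
    rwa [hfix p hp.1, den_embed_of_ne hM hU hp.1 hp.2, den_embed_of_ne hM hU' hp.1 hp.2,
      Set.singleton_subset_iff, Set.singleton_subset_iff] at this
  refine ⟨a, ha, Set.ext fun x => ⟨fun hx => ?_, fun hx => ?_⟩⟩
  · exact (key x (hU ▸ D.den_subset a ha hx)).1 hx
  · exact (key x (hU' ▸ D'.den_subset _ hb hx)).2 hx

end ClassAlgebra

/-! ### Relative sets and co-sets -/

theorem definableOver_pair_mem (hM : IsCTM M) {A : ZFSet} (hA : A ∈ M) {k : ℕ} (i j : Fin k) :
    DefinableOver M fun v => ZFSet.pair (v i) (v j) ∈ A := by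
  refine ((definableOver_eq_pair hM (Fin.last k) i.castSucc j.castSucc).and
    (definableOver_mem_const (Fin.last k) hA)).exists_mem.congr fun v _ => ?_
  simp only [Fin.snoc_last, Fin.snoc_castSucc]
  exact ⟨fun ⟨_, _, hp, h⟩ => hp ▸ h, fun h => ⟨_, hM.mem_of_mem hA h, rfl, h⟩⟩

def setCode (a : ZFSet) : ZFSet := ZFSet.pair ∅ a

def cosetCode (a : ZFSet) : ZFSet := ZFSet.pair {∅} a

theorem setCode_ne_cosetCode (a d : ZFSet) : setCode a ≠ cosetCode d :=
  fun h => singleton_ne_empty ∅ (ZFSet.pair_inj.1 h).1.symm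

section SetCoset

variable (χ : Set ZFSet)

def setCosetCodes (M : ZFSet) : Set ZFSet :=
  {b | ∃ a ∈ M, (∀ x ∈ a, x ∈ χ) ∧ (b = setCode a ∨ b = cosetCode a)}

def setCosetDen (b : ZFSet) : Set ZFSet :=
  {x | x ∈ χ ∧ ∃ a, (b = setCode a ∧ x ∈ a) ∨ (b = cosetCode a ∧ x ∉ a)}

variable {χ}

theorem setCosetDen_setCode (a : ZFSet) :
    setCosetDen χ (setCode a) = {x | x ∈ χ ∧ x ∈ a} := by
  ext x
  simp [setCosetDen, setCode, cosetCode, (singleton_ne_empty ∅).symm]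

theorem setCosetDen_cosetCode (a : ZFSet) :
    setCosetDen χ (cosetCode a) = {x | x ∈ χ ∧ x ∉ a} := by
  ext x
  simp [setCosetDen, setCode, cosetCode, singleton_ne_empty]

theorem subset_of_setCode_mem {a : ZFSet} (h : setCode a ∈ setCosetCodes χ M) :
    a ∈ M ∧ ∀ x ∈ a, x ∈ χ := by
  obtain ⟨d, hdM, hd, h | h⟩ := h
  · obtain rfl := (ZFSet.pair_inj.1 h).2
    exact ⟨hdM, hd⟩
  · exact absurd h (setCode_ne_cosetCode a d)

theorem subset_of_cosetCode_mem {a : ZFSet} (h : cosetCode a ∈ setCosetCodes χ M) :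
    a ∈ M ∧ ∀ x ∈ a, x ∈ χ := by
  obtain ⟨d, hdM, hd, h | h⟩ := h
  · exact absurd h.symm (setCode_ne_cosetCode d a)
  · obtain rfl := (ZFSet.pair_inj.1 h).2
    exact ⟨hdM, hd⟩

theorem setOf_mem_ne_setOf_notMem (hM : IsCTM M) (hproper : ∀ s ∈ M, ∃ x ∈ χ, x ∉ s)
    {a d : ZFSet} (ha : a ∈ M) (hd : d ∈ M) :
    {x | x ∈ χ ∧ x ∈ a} ≠ {x | x ∈ χ ∧ x ∉ d} := by
  intro h
  obtain ⟨x, hxχ, hx⟩ := hproper _ (hM.union_mem ha hd)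
  rw [ZFSet.mem_union, not_or] at hx
  exact hx.1 (h.symm ▸ ⟨hxχ, hx.2⟩ : x ∈ {x | x ∈ χ ∧ x ∈ a}).2

theorem setCosetDen_injOn (hM : IsCTM M) (hproper : ∀ s ∈ M, ∃ x ∈ χ, x ∉ s) :
    Set.InjOn (setCosetDen χ) (setCosetCodes χ M) := by
  rintro _ ⟨a, haM, ha, rfl | rfl⟩ _ ⟨d, hdM, hd, rfl | rfl⟩ h <;>
    simp only [setCosetDen_setCode, setCosetDen_cosetCode] at h
  · rw [Set.ext_iff] at h
    refine congrArg setCode (ZFSet.ext fun x => ⟨fun hx => ?_, fun hx => ?_⟩)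
    exacts [((h x).1 ⟨ha x hx, hx⟩).2, ((h x).2 ⟨hd x hx, hx⟩).2]
  · exact absurd h (setOf_mem_ne_setOf_notMem hM hproper haM hdM)
  · exact absurd h.symm (setOf_mem_ne_setOf_notMem hM hproper hdM haM)
  · rw [Set.ext_iff] at h
    refine congrArg cosetCode (ZFSet.ext fun x => ⟨fun hx => ?_, fun hx => ?_⟩)
    · exact not_not.1 fun hxd => ((h x).2 ⟨ha x hx, hxd⟩).2 hx
    · exact not_not.1 fun hxa => ((h x).1 ⟨hd x hx, hxa⟩).2 hx

/-- A union of relative sets and co-sets, at least one of them a co-set `χ \ a₀`, is the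
co-set of the elements of `a₀` that lie in all the complements and in none of the sets. -/
theorem exists_sUnion_of_cosetCode_mem (hM : IsCTM M) {A : ZFSet} (hA : A ∈ M)
    (hcodes : ∀ b ∈ A, b ∈ setCosetCodes χ M) {a₀ : ZFSet} (h₀ : cosetCode a₀ ∈ A) :
    ∃ s ∈ setCosetCodes χ M, setCosetDen χ s = {x | ∃ b ∈ A, x ∈ setCosetDen χ b} := by
  let Q x := (∀ a, cosetCode a ∈ A → x ∈ a) ∧ ∀ a, setCode a ∈ A → x ∉ a
  have hQ : DefinableOver M fun v : Fin 1 → ZFSet => Q (v 0) := by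
    refine ((((definableOver_pair_mem hM hA 2 1).snoc_const (hM.singleton_mem hM.empty_mem)).imp
      (definableOver_mem 0 1)).forall_mem.and
      (((definableOver_pair_mem hM hA 2 1).snoc_const hM.empty_mem).imp
      (definableOver_mem 0 1).not).forall_mem).congr fun v _ => ?_
    refine and_congr (forall_congr' fun a => ⟨fun h ha => h ?_ ha, fun h _ => h⟩)
      (forall_congr' fun a => ⟨fun h ha => h ?_ ha, fun h _ => h⟩)
    exacts [(hM.mem_of_pair_mem (hM.mem_of_mem hA ha)).2,
      (hM.mem_of_pair_mem (hM.mem_of_mem hA ha)).2]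
  have ha₀ := subset_of_cosetCode_mem (hcodes _ h₀)
  refine ⟨cosetCode (ZFSet.sep Q a₀), ⟨_, hM.sep_mem hQ ha₀.1,
    fun x hx => ha₀.2 x (ZFSet.mem_sep.1 hx).1, Or.inr rfl⟩, ?_⟩
  rw [setCosetDen_cosetCode]
  ext x
  simp only [Set.mem_ofPred_eq, ZFSet.mem_sep, not_and]
  constructor
  · rintro ⟨hxχ, hx⟩
    by_cases hxa₀ : x ∈ a₀
    · simp only [Q, not_and_or, not_forall, not_not] at hx
      rcases hx hxa₀ with ⟨a, ha, hxa⟩ | ⟨a, ha, hxa⟩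
      · exact ⟨_, ha, by rw [setCosetDen_cosetCode]; exact ⟨hxχ, hxa⟩⟩
      · exact ⟨_, ha, by rw [setCosetDen_setCode]; exact ⟨hxχ, hxa⟩⟩
    · exact ⟨_, h₀, by rw [setCosetDen_cosetCode]; exact ⟨hxχ, hxa₀⟩⟩
  · rintro ⟨b, hb, hxb⟩
    refine ⟨hxb.1, fun _ hQx => ?_⟩
    obtain ⟨a, -, -, rfl | rfl⟩ := hcodes b hb
    · rw [setCosetDen_setCode] at hxb
      exact hQx.2 a hb hxb.2
    · rw [setCosetDen_cosetCode] at hxb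
      exact hxb.2 (hQx.1 a hb)

theorem exists_sUnion_of_forall_setCode (hM : IsCTM M) {A : ZFSet} (hA : A ∈ M)
    (hcodes : ∀ b ∈ A, b ∈ setCosetCodes χ M) (hsets : ∀ a, cosetCode a ∉ A) :
    ∃ s ∈ setCosetCodes χ M, setCosetDen χ s = {x | ∃ b ∈ A, x ∈ setCosetDen χ b} := by
  let Q x := ∃ a, setCode a ∈ A ∧ x ∈ a
  have hQ : DefinableOver M fun v : Fin 1 → ZFSet => Q (v 0) := by
    refine (((definableOver_pair_mem hM hA 2 1).snoc_const hM.empty_mem).and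
      (definableOver_mem 0 1)).exists_mem.congr fun v _ => ?_
    exact ⟨fun ⟨a, _, h⟩ => ⟨a, h⟩,
      fun ⟨a, h⟩ => ⟨a, (hM.mem_of_pair_mem (hM.mem_of_mem hA h.1)).2, h⟩⟩
  have hUM : ZFSet.sep Q A.sUnion.sUnion.sUnion ∈ M :=
    hM.sep_mem hQ (hM.union _ (hM.union _ (hM.union _ hA)))
  refine ⟨setCode (ZFSet.sep Q A.sUnion.sUnion.sUnion),
    ⟨_, hUM, fun x hx => ?_, Or.inl rfl⟩, ?_⟩
  · obtain ⟨a, ha, hxa⟩ := (ZFSet.mem_sep.1 hx).2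
    exact (subset_of_setCode_mem (hcodes _ ha)).2 x hxa
  rw [setCosetDen_setCode]
  ext x
  simp only [Set.mem_ofPred_eq, ZFSet.mem_sep]
  constructor
  · rintro ⟨hxχ, -, a, ha, hxa⟩
    exact ⟨_, ha, by rw [setCosetDen_setCode]; exact ⟨hxχ, hxa⟩⟩
  · rintro ⟨b, hb, hxb⟩
    obtain ⟨a, -, -, rfl | rfl⟩ := hcodes b hb
    · rw [setCosetDen_setCode] at hxb
      exact ⟨hxb.1, ZFSet.mem_sUnion_of_mem hxb.2 (mem_sUnion_sUnion_of_pair_mem hb).2,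
        a, hb, hxb.2⟩
    · exact absurd hb (hsets a)

theorem definableOver_mem_setCosetCodes (hM : IsCTM M)
    (hχ : DefinableOver M fun v : Fin 1 → ZFSet => v 0 ∈ χ) :
    DefinableOver M fun v : Fin 1 → ZFSet => v 0 ∈ setCosetCodes χ M := by
  refine (((definableOver_mem 2 1).imp (hχ.comp ![2])).forall_mem.and
    ((definableOver_eq_pair_const hM hM.empty_mem 0 1).or
      (definableOver_eq_pair_const hM (hM.singleton_mem hM.empty_mem) 0 1))).exists_mem.congr
    fun v _ => exists_congr fun a => and_congr_right fun ha => and_congr_left fun _ =>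
      ⟨fun h x hx => h x (hM.mem_of_mem ha hx) hx, fun h x _ hx => h x hx⟩

theorem definableOver_mem_setCosetDen (hM : IsCTM M)
    (hχ : DefinableOver M fun v : Fin 1 → ZFSet => v 0 ∈ χ) :
    DefinableOver M fun v : Fin 2 → ZFSet =>
      v 1 ∈ setCosetCodes χ M ∧ v 0 ∈ setCosetDen χ (v 1) := by
  refine (((definableOver_mem_setCosetCodes hM hχ).comp ![1]).and ((hχ.comp ![0]).and
    (((definableOver_eq_pair_const hM hM.empty_mem 1 2).and (definableOver_mem 0 2)).or
      ((definableOver_eq_pair_const hM (hM.singleton_mem hM.empty_mem) 1 2).and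
        (definableOver_mem 0 2).not)).exists_mem)).congr fun v hv => ?_
  refine and_congr_right fun _ => and_congr_right fun _ =>
    ⟨fun ⟨a, _, h⟩ => ⟨a, h⟩, fun ⟨a, h⟩ => ⟨a, ?_, h⟩⟩
  rcases h with ⟨h, -⟩ | ⟨h, -⟩ <;> exact (hM.mem_of_pair_mem (h ▸ hv 1)).2

end SetCoset

def setCosetAlgebra (hM : IsCTM M) (χ : Set ZFSet) (hχM : χ ⊆ M.toSet)
    (hχ : DefinableOver M fun v : Fin 1 → ZFSet => v 0 ∈ χ)
    (hproper : ∀ s ∈ M, ∃ x ∈ χ, x ∉ s) : ClassAlgebra M where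
  univ := χ
  code := setCosetCodes χ M
  den := setCosetDen χ
  univ_subset := hχM
  code_subset := by
    rintro _ ⟨a, ha, -, rfl | rfl⟩
    exacts [hM.pair_mem hM.empty_mem ha, hM.pair_mem (hM.singleton_mem hM.empty_mem) ha]
  den_subset _ _ _ hx := hx.1
  den_injOn := setCosetDen_injOn hM hproper
  exists_compl := by
    rintro _ ⟨a, ha, haχ, rfl | rfl⟩
    · refine ⟨cosetCode a, ⟨a, ha, haχ, Or.inr rfl⟩, ?_⟩
      rw [setCosetDen_setCode, setCosetDen_cosetCode]
      ext x
      simp only [Set.mem_ofPred_eq, Set.mem_sdiff]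
      tauto
    · refine ⟨setCode a, ⟨a, ha, haχ, Or.inl rfl⟩, ?_⟩
      rw [setCosetDen_setCode, setCosetDen_cosetCode]
      ext x
      simp only [Set.mem_ofPred_eq, Set.mem_sdiff]
      tauto
  exists_singleton x hx := by
    refine ⟨setCode {x}, ⟨{x}, hM.singleton_mem (hχM hx), fun y hy => ?_, Or.inl rfl⟩, ?_⟩
    · rwa [ZFSet.mem_singleton.1 hy]
    · rw [setCosetDen_setCode]
      ext y
      simp only [Set.mem_ofPred_eq, ZFSet.mem_singleton, Set.mem_singleton_iff]
      exact ⟨fun h => h.2, fun h => ⟨h ▸ hx, h⟩⟩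
  exists_sUnion A hA hcodes := by
    by_cases h : ∃ a, cosetCode a ∈ A
    · obtain ⟨a₀, h₀⟩ := h
      exact exists_sUnion_of_cosetCode_mem hM hA hcodes h₀
    · exact exists_sUnion_of_forall_setCode hM hA hcodes (not_exists.1 h)
  univ_definable := hχ
  code_definable := definableOver_mem_setCosetCodes hM hχ
  mem_den_definable := definableOver_mem_setCosetDen hM hχ

/-! ### Products of algebras over disjoint universes -/

namespace ClassAlgebra

variable (D₁ D₂ : ClassAlgebra M)

def prodCodes : Set ZFSet := {b | ∃ c ∈ D₁.code, ∃ d ∈ D₂.code, b = ZFSet.pair c d}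

def prodDen (b : ZFSet) : Set ZFSet :=
  {x | ∃ c d, b = ZFSet.pair c d ∧ (x ∈ D₁.den c ∨ x ∈ D₂.den d)}

variable {D₁ D₂}

theorem prodDen_pair (c d : ZFSet) :
    prodDen D₁ D₂ (ZFSet.pair c d) = D₁.den c ∪ D₂.den d := by
  ext x
  simp [prodDen]

theorem mem_prodCodes_pair {c d : ZFSet} (h : ZFSet.pair c d ∈ prodCodes D₁ D₂) :
    c ∈ D₁.code ∧ d ∈ D₂.code := by
  obtain ⟨c', hc, d', hd, h⟩ := h
  obtain ⟨rfl, rfl⟩ := ZFSet.pair_inj.1 h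
  exact ⟨hc, hd⟩

theorem union_inter_univ_left (hdisj : Disjoint D₁.univ D₂.univ) {c d : ZFSet}
    (hc : c ∈ D₁.code) (hd : d ∈ D₂.code) :
    (D₁.den c ∪ D₂.den d) ∩ D₁.univ = D₁.den c := by
  rw [Set.union_inter_distrib_right, Set.inter_eq_left.2 (D₁.den_subset c hc),
    (hdisj.symm.mono_left (D₂.den_subset d hd)).inter_eq, Set.union_empty]

theorem union_inter_univ_right (hdisj : Disjoint D₁.univ D₂.univ) {c d : ZFSet}
    (hc : c ∈ D₁.code) (hd : d ∈ D₂.code) :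
    (D₁.den c ∪ D₂.den d) ∩ D₂.univ = D₂.den d := by
  rw [Set.union_inter_distrib_right, Set.inter_eq_left.2 (D₂.den_subset d hd),
    (hdisj.mono_left (D₁.den_subset c hc)).inter_eq, Set.empty_union]

theorem exists_fst_mem (hM : IsCTM M) {A : ZFSet} (hA : A ∈ M) :
    ∃ A₁ ∈ M, ∀ c, c ∈ A₁ ↔ ∃ d, ZFSet.pair c d ∈ A := by
  refine ⟨ZFSet.sep (fun c => ∃ d, ZFSet.pair c d ∈ A) A.sUnion.sUnion,
    hM.sep_mem ?_ (hM.union _ (hM.union _ hA)), fun c => ?_⟩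
  · refine (definableOver_pair_mem hM hA 0 1).exists_mem.congr fun v _ => ?_
    exact ⟨fun ⟨d, _, h⟩ => ⟨d, h⟩,
      fun ⟨d, h⟩ => ⟨d, (hM.mem_of_pair_mem (hM.mem_of_mem hA h)).2, h⟩⟩
  · rw [ZFSet.mem_sep]
    exact ⟨fun h => h.2, fun ⟨d, h⟩ => ⟨(mem_sUnion_sUnion_of_pair_mem h).1, d, h⟩⟩

theorem exists_snd_mem (hM : IsCTM M) {A : ZFSet} (hA : A ∈ M) :
    ∃ A₂ ∈ M, ∀ d, d ∈ A₂ ↔ ∃ c, ZFSet.pair c d ∈ A := by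
  refine ⟨ZFSet.sep (fun d => ∃ c, ZFSet.pair c d ∈ A) A.sUnion.sUnion,
    hM.sep_mem ?_ (hM.union _ (hM.union _ hA)), fun d => ?_⟩
  · refine (definableOver_pair_mem hM hA 1 0).exists_mem.congr fun v _ => ?_
    exact ⟨fun ⟨c, _, h⟩ => ⟨c, h⟩,
      fun ⟨c, h⟩ => ⟨c, (hM.mem_of_pair_mem (hM.mem_of_mem hA h)).1, h⟩⟩
  · rw [ZFSet.mem_sep]
    exact ⟨fun h => h.2, fun ⟨c, h⟩ => ⟨(mem_sUnion_sUnion_of_pair_mem h).2, c, h⟩⟩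

theorem exists_sUnion_prod (hM : IsCTM M) {A : ZFSet} (hA : A ∈ M)
    (hcodes : ∀ b ∈ A, b ∈ prodCodes D₁ D₂) :
    ∃ s ∈ prodCodes D₁ D₂,
      prodDen D₁ D₂ s = {x | ∃ b ∈ A, x ∈ prodDen D₁ D₂ b} := by
  obtain ⟨A₁, hA₁, hA₁A⟩ := exists_fst_mem hM hA
  obtain ⟨A₂, hA₂, hA₂A⟩ := exists_snd_mem hM hA
  obtain ⟨s₁, hs₁, hden₁⟩ := D₁.exists_sUnion A₁ hA₁ fun c hc => by
    obtain ⟨d, h⟩ := (hA₁A c).1 hc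
    exact (mem_prodCodes_pair (hcodes _ h)).1
  obtain ⟨s₂, hs₂, hden₂⟩ := D₂.exists_sUnion A₂ hA₂ fun d hd => by
    obtain ⟨c, h⟩ := (hA₂A d).1 hd
    exact (mem_prodCodes_pair (hcodes _ h)).2
  refine ⟨ZFSet.pair s₁ s₂, ⟨s₁, hs₁, s₂, hs₂, rfl⟩, ?_⟩
  rw [prodDen_pair, hden₁, hden₂]
  ext x
  simp only [Set.mem_union, Set.mem_ofPred_eq, hA₁A, hA₂A]
  constructor
  · rintro (⟨c, ⟨d, h⟩, hx⟩ | ⟨d, ⟨c, h⟩, hx⟩) <;>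
      exact ⟨_, h, by rw [prodDen_pair]; simp [hx]⟩
  · rintro ⟨b, hb, hx⟩
    obtain ⟨c, -, d, -, rfl⟩ := hcodes b hb
    rw [prodDen_pair] at hx
    rcases hx with hx | hx
    exacts [Or.inl ⟨c, ⟨d, hb⟩, hx⟩, Or.inr ⟨d, ⟨c, hb⟩, hx⟩]

theorem exists_compl_prod (hdisj : Disjoint D₁.univ D₂.univ) {b : ZFSet}
    (hb : b ∈ prodCodes D₁ D₂) :
    ∃ c ∈ prodCodes D₁ D₂,
      prodDen D₁ D₂ c = (D₁.univ ∪ D₂.univ) \ prodDen D₁ D₂ b := by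
  obtain ⟨c, hc, d, hd, rfl⟩ := hb
  obtain ⟨c', hc', hden₁⟩ := D₁.exists_compl c hc
  obtain ⟨d', hd', hden₂⟩ := D₂.exists_compl d hd
  refine ⟨ZFSet.pair c' d', ⟨c', hc', d', hd', rfl⟩, ?_⟩
  rw [prodDen_pair, prodDen_pair, hden₁, hden₂]
  have h₁ := D₁.den_subset c hc
  have h₂ := D₂.den_subset d hd
  ext x
  have hx₁ : x ∈ D₁.univ → x ∉ D₂.univ := fun h h' => Set.disjoint_left.1 hdisj h h'
  simp only [Set.mem_union, Set.mem_sdiff]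
  constructor
  · rintro (⟨hx, hxc⟩ | ⟨hx, hxd⟩)
    · exact ⟨Or.inl hx, not_or.2 ⟨hxc, fun h => hx₁ hx (h₂ h)⟩⟩
    · exact ⟨Or.inr hx, not_or.2 ⟨fun h => hx₁ (h₁ h) hx, hxd⟩⟩
  · rintro ⟨hx | hx, hxn⟩
    exacts [Or.inl ⟨hx, fun h => hxn (Or.inl h)⟩, Or.inr ⟨hx, fun h => hxn (Or.inr h)⟩]

variable (D₁ D₂)

/-- As a Boolean algebra, the product of `D₁` and `D₂`. -/
def prod (hM : IsCTM M) (hdisj : Disjoint D₁.univ D₂.univ) : ClassAlgebra M where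
  univ := D₁.univ ∪ D₂.univ
  code := prodCodes D₁ D₂
  den := prodDen D₁ D₂
  univ_subset := Set.union_subset D₁.univ_subset D₂.univ_subset
  code_subset := by
    rintro _ ⟨c, hc, d, hd, rfl⟩
    exact hM.pair_mem (D₁.code_subset hc) (D₂.code_subset hd)
  den_subset := by
    rintro _ ⟨c, hc, d, hd, rfl⟩
    rw [prodDen_pair]
    exact Set.union_subset_union (D₁.den_subset c hc) (D₂.den_subset d hd)
  den_injOn := by
    rintro _ ⟨c, hc, d, hd, rfl⟩ _ ⟨c', hc', d', hd', rfl⟩ h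
    rw [prodDen_pair, prodDen_pair] at h
    have h₁ := congrArg (· ∩ D₁.univ) h
    have h₂ := congrArg (· ∩ D₂.univ) h
    simp only [union_inter_univ_left hdisj hc hd, union_inter_univ_left hdisj hc' hd',
      union_inter_univ_right hdisj hc hd, union_inter_univ_right hdisj hc' hd'] at h₁ h₂
    rw [D₁.den_injOn hc hc' h₁, D₂.den_injOn hd hd' h₂]
  exists_compl _ hb := exists_compl_prod hdisj hb
  exists_singleton x hx := by
    obtain ⟨e₁, he₁, hden₁⟩ := isCoded_empty (D := D₁) hM
    obtain ⟨e₂, he₂, hden₂⟩ := isCoded_empty (D := D₂) hM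
    rcases hx with hx | hx
    · obtain ⟨c, hc, hden⟩ := D₁.exists_singleton x hx
      exact ⟨ZFSet.pair c e₂, ⟨c, hc, e₂, he₂, rfl⟩, by rw [prodDen_pair, hden, hden₂,
        Set.union_empty]⟩
    · obtain ⟨d, hd, hden⟩ := D₂.exists_singleton x hx
      exact ⟨ZFSet.pair e₁ d, ⟨e₁, he₁, d, hd, rfl⟩, by rw [prodDen_pair, hden, hden₁,
        Set.empty_union]⟩
  exists_sUnion _ hA hcodes := exists_sUnion_prod hM hA hcodes
  univ_definable := D₁.univ_definable.or D₂.univ_definable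
  code_definable :=
    ((D₁.definableOver_code 1).and ((D₂.definableOver_code 2).and
      (definableOver_eq_pair hM 0 1 2))).exists_mem.exists_mem.congr fun v _ =>
        ⟨fun ⟨c, _, d, _, hc, hd, h⟩ => ⟨c, hc, d, hd, h⟩,
          fun ⟨c, hc, d, hd, h⟩ =>
            ⟨c, D₁.code_subset hc, d, D₂.code_subset hd, hc, hd, h⟩⟩
  mem_den_definable := by
    refine ((definableOver_eq_pair hM 1 2 3).and (((D₁.definableOver_code 2).and
      (D₂.definableOver_code 3)).and ((D₁.definableOver_mem_den 0 2).or
        (D₂.definableOver_mem_den 0 3)))).exists_mem.exists_mem.congr fun v _ => ?_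
    constructor
    · rintro ⟨c, -, d, -, (h : v 1 = ZFSet.pair c d), ⟨hc, hd⟩,
        (hx : (c ∈ D₁.code ∧ v 0 ∈ D₁.den c) ∨
          (d ∈ D₂.code ∧ v 0 ∈ D₂.den d))⟩
      refine ⟨⟨c, hc, d, hd, h⟩, ?_⟩
      rw [h, prodDen_pair]
      exact hx.imp And.right And.right
    · rintro ⟨⟨c, hc, d, hd, h⟩, hx⟩
      rw [h, prodDen_pair] at hx
      exact ⟨c, D₁.code_subset hc, d, D₂.code_subset hd, h, ⟨hc, hd⟩,
        hx.imp (⟨hc, ·⟩) (⟨hd, ·⟩)⟩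

variable {D₁ D₂}

theorem isCoded_univ_left (hM : IsCTM M) (hdisj : Disjoint D₁.univ D₂.univ) :
    (D₁.prod D₂ hM hdisj).IsCoded D₁.univ := by
  obtain ⟨c, hc, hden₁⟩ := isCoded_univ (D := D₁) hM
  obtain ⟨e, he, hden₂⟩ := isCoded_empty (D := D₂) hM
  exact ⟨ZFSet.pair c e, ⟨c, hc, e, he, rfl⟩, by
    change prodDen D₁ D₂ _ = _
    rw [prodDen_pair, hden₁, hden₂, Set.union_empty]⟩

end ClassAlgebra

/-! ### Two non-isomorphic completions -/

def elemsWithEmpty (M : ZFSet) : Set ZFSet := {x | x ∈ M ∧ ∅ ∈ x}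

def elemsWithoutEmpty (M : ZFSet) : Set ZFSet := {x | x ∈ M ∧ x ≠ ∅ ∧ ∅ ∉ x}

theorem exists_mem_nonemptyElems_notMem (hM : IsCTM M) :
    ∀ s ∈ M, ∃ x ∈ nonemptyElems M, x ∉ s := fun s hs =>
  ⟨{s}, ⟨hM.singleton_mem hs, singleton_ne_empty s⟩,
    fun h => ZFSet.mem_asymm h (ZFSet.mem_singleton.2 rfl)⟩

theorem exists_mem_elemsWithEmpty_notMem (hM : IsCTM M) :
    ∀ s ∈ M, ∃ x ∈ elemsWithEmpty M, x ∉ s := fun s hs =>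
  ⟨{∅, {s}},
    ⟨hM.pairing _ hM.empty_mem _ (hM.singleton_mem hs), ZFSet.mem_pair.2 (Or.inl rfl)⟩,
    mem_asymm₃ (ZFSet.mem_singleton.2 rfl) (ZFSet.mem_pair.2 (Or.inr rfl))⟩

theorem exists_mem_elemsWithoutEmpty_notMem (hM : IsCTM M) :
    ∀ s ∈ M, ∃ x ∈ elemsWithoutEmpty M, x ∉ s := fun s hs =>
  ⟨{{s}}, ⟨hM.singleton_mem (hM.singleton_mem hs), singleton_ne_empty _,
      fun h => singleton_ne_empty s (ZFSet.mem_singleton.1 h).symm⟩,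
    mem_asymm₃ (ZFSet.mem_singleton.2 rfl) (ZFSet.mem_singleton.2 rfl)⟩

theorem elemsWithEmpty_union_elemsWithoutEmpty :
    elemsWithEmpty M ∪ elemsWithoutEmpty M = nonemptyElems M := by
  ext x
  simp only [elemsWithEmpty, elemsWithoutEmpty, nonemptyElems, Set.mem_union, Set.mem_ofPred_eq]
  by_cases h : ∅ ∈ x
  · simp only [h, ne_eq, not_true_eq_false, and_false, or_false, and_true]
    exact ⟨fun hx => ⟨hx, fun he => ZFSet.notMem_empty ∅ (he ▸ h)⟩, And.left⟩
  · simp [h]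

theorem disjoint_elemsWithEmpty_elemsWithoutEmpty :
    Disjoint (elemsWithEmpty M) (elemsWithoutEmpty M) :=
  Set.disjoint_left.2 fun _ h₁ h₂ => h₂.2.2 h₁.2

def nonemptyAlgebra (hM : IsCTM M) : ClassAlgebra M :=
  setCosetAlgebra hM (nonemptyElems M) (fun _ h => h.1)
    ((definableOver_eq_const 0 hM.empty_mem).not.congr
      fun _ hv => ⟨fun h => ⟨hv 0, h⟩, And.right⟩)
    (exists_mem_nonemptyElems_notMem hM)

def splitAlgebra (hM : IsCTM M) : ClassAlgebra M :=
  (setCosetAlgebra hM (elemsWithEmpty M) (fun _ h => h.1)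
    ((definableOver_const_mem 0 hM.empty_mem).congr
      fun _ hv => ⟨fun h => ⟨hv 0, h⟩, And.right⟩)
    (exists_mem_elemsWithEmpty_notMem hM)).prod
  (setCosetAlgebra hM (elemsWithoutEmpty M) (fun _ h => h.1)
    (((definableOver_eq_const 0 hM.empty_mem).not.and
      (definableOver_const_mem 0 hM.empty_mem).not).congr
      fun _ hv => ⟨fun h => ⟨hv 0, h⟩, And.right⟩)
    (exists_mem_elemsWithoutEmpty_notMem hM))
  hM disjoint_elemsWithEmpty_elemsWithoutEmpty

theorem isCoded_elemsWithEmpty_splitAlgebra (hM : IsCTM M) :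
    (splitAlgebra hM).IsCoded (elemsWithEmpty M) :=
  ClassAlgebra.isCoded_univ_left hM _

theorem not_isCoded_elemsWithEmpty_nonemptyAlgebra (hM : IsCTM M) :
    ¬ (nonemptyAlgebra hM).IsCoded (elemsWithEmpty M) := by
  rintro ⟨_, ⟨a, ha, -, rfl | rfl⟩, hden⟩
  · obtain ⟨x, hx, hxa⟩ := exists_mem_elemsWithEmpty_notMem hM a ha
    change setCosetDen _ (setCode a) = _ at hden
    rw [setCosetDen_setCode] at hden
    exact hxa (hden ▸ hx : x ∈ {x | x ∈ nonemptyElems M ∧ x ∈ a}).2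
  · obtain ⟨x, hx, hxa⟩ := exists_mem_elemsWithoutEmpty_notMem hM a ha
    change setCosetDen _ (cosetCode a) = _ at hden
    rw [setCosetDen_cosetCode] at hden
    have : x ∈ elemsWithEmpty M := hden ▸ ⟨⟨hx.1, hx.2.1⟩, hxa⟩
    exact hx.2.2 this.2

theorem statement5_general (M : ZFSet) (hM : IsCTM M) :
    ∃ F : ClassForcing M (DefClasses M),
      ∃ (B0 B1 : MBoolAlg M (DefClasses M)) (π0 π1 : ZFSet → ZFSet),
        BoolCompletion F B0 π0 ∧ BoolCompletion F B1 π1 ∧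
        ¬ FixingIso F B0 B1 π0 π1 := by
  have hU₀ : (nonemptyAlgebra hM).univ = nonemptyElems M := rfl
  have hU₁ : (splitAlgebra hM).univ = nonemptyElems M :=
    elemsWithEmpty_union_elemsWithoutEmpty
  refine ⟨antichainForcing M hM, (nonemptyAlgebra hM).toMBoolAlg hM,
    (splitAlgebra hM).toMBoolAlg hM, (nonemptyAlgebra hM).embed, (splitAlgebra hM).embed,
    ClassAlgebra.boolCompletion hM hU₀, ClassAlgebra.boolCompletion hM hU₁, fun hiso => ?_⟩
  obtain ⟨b, hb, hden⟩ := isCoded_elemsWithEmpty_splitAlgebra hM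
  obtain ⟨a, ha, had⟩ := ClassAlgebra.exists_den_eq_of_fixingIso hM hU₀ hU₁ hiso hb
  exact not_isCoded_elemsWithEmpty_nonemptyAlgebra hM ⟨a, ha, had.trans hden⟩

/-- Let `M` be a countable transitive model of `ZF⁻` with a
global well-order of order type `Ord^M` definable over `M`. Then there is a
notion of class forcing definable over `M` with two Boolean completions in `M`
that are non-isomorphic: no isomorphism in `V` between them fixes `ℙ`. -/
theorem statement5 (M : ZFSet) (hM : IsCTM M) (hwo : HasDefWellOrderOT M) :
    ∃ F : ClassForcing M (DefClasses M),
      ∃ (B0 B1 : MBoolAlg M (DefClasses M)) (π0 π1 : ZFSet → ZFSet),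
        BoolCompletion F B0 π0 ∧ BoolCompletion F B1 π1 ∧
        ¬ FixingIso F B0 B1 π0 π1 :=
  statement5_general M hM

end CF
end

section
/- Let M be a countable transitive model of ZF⁻. Then the set of all conditions p in the Friedman forcing 𝔽^M with dom(f_p) = d_p is dense in 𝔽^M. -/
set_option autoImplicit false

attribute [local instance] Classical.propDecidable

namespace CF

variable {M : ZFSet} {C : Set (Set ZFSet)}

/-- `f` is a (set-coded) function: a set of Kuratowski pairs which is functional. -/
def isFuncZ (f : ZFSet) : Prop :=
  (∀ x ∈ f, ∃ a b : ZFSet, x = ZFSet.pair a b) ∧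
  ∀ a b b' : ZFSet, ZFSet.pair a b ∈ f → ZFSet.pair a b' ∈ f → b = b'

/-- `f` is injective (as a set-coded relation). -/
def isInjZ (f : ZFSet) : Prop :=
  ∀ a a' b : ZFSet, ZFSet.pair a b ∈ f → ZFSet.pair a' b ∈ f → a = a'

/-- Domain of a set-coded relation. -/
def domZ (f : ZFSet) : Set ZFSet := {a | ∃ b, ZFSet.pair a b ∈ f}

/-- Range of a set-coded relation. -/
def ranZ (f : ZFSet) : Set ZFSet := {b | ∃ a, ZFSet.pair a b ∈ f}

/-- A set-coded binary relation is acyclic iff its transitive closure is irreflexive. -/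
def acyclicZ (e : ZFSet) : Prop :=
  ∀ a : ZFSet, ¬ Relation.TransGen (fun x y => ZFSet.pair x y ∈ e) a a

/-- The ordered triple `⟨d, e, f⟩`. -/
def tripleZ (d e f : ZFSet) : ZFSet := ZFSet.pair d (ZFSet.pair e f)
/-- `⟨d, e, f⟩` are the data of a condition of the Friedman forcing `𝔽^M`:
`d` is a finite subset of `ω`, `e` is a binary acyclic relation on `d`, `f` is
an injective function with `dom f ∈ {∅, d}` and `ran f ⊆ M`, which respects `∈`
whenever `dom f = d`. -/
structure FCond (M : ZFSet) (d e f : ZFSet) : Prop where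
  d_sub : ∀ n ∈ d, n ∈ ZFSet.omega
  d_fin : d.toSet.Finite
  e_sub : ∀ x ∈ e, ∃ a ∈ d, ∃ b ∈ d, x = ZFSet.pair a b
  e_acyc : acyclicZ e
  f_fun : isFuncZ f
  f_inj : isInjZ f
  f_dom : domZ f = (∅ : Set ZFSet) ∨ domZ f = d.toSet
  f_ran : ∀ b, b ∈ ranZ f → b ∈ M
  f_compat : domZ f = d.toSet →
    ∀ i ∈ d, ∀ j ∈ d, ∀ a b : ZFSet, ZFSet.pair i a ∈ f → ZFSet.pair j b ∈ f →
      (ZFSet.pair i j ∈ e ↔ a ∈ b)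

/-- The domain of the Friedman forcing `𝔽^M`. -/
def FriedmanP (M : ZFSet) : Set ZFSet :=
  {x | ∃ d e f, FCond M d e f ∧ x = tripleZ d e f}

/-- The ordering of the Friedman forcing: `p ≤ q` iff `d_q ⊆ d_p`,
`e_p ∩ (d_q × d_q) = e_q` and `f_q ⊆ f_p`. -/
def FriedmanLe (p q : ZFSet) : Prop :=
  ∃ dp ep fp dq eq' fq : ZFSet, p = tripleZ dp ep fp ∧ q = tripleZ dq eq' fq ∧
    (∀ n ∈ dq, n ∈ dp) ∧
    (∀ x : ZFSet, x ∈ eq' ↔ (x ∈ ep ∧ ∃ a ∈ dq, ∃ b ∈ dq, x = ZFSet.pair a b)) ∧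
    (∀ x ∈ fq, x ∈ fp)

/-! If `dom f_p = d_p` there is nothing to do. Otherwise `f_p = ∅`, and we need an injective
`f : d_p → M` with `f i ∈ f j ↔ i e_p j`. A finite acyclic relation is well founded, so we may
recursively put `f j = {{∅, j}} ∪ {f i | i e_p j}`. The tag `{∅, j}` makes `f` injective, because
no value of `f` has `∅` as an element; and each `f j` is a finite set of elements of `M`, hence
lies in `M`. -/

attribute [local instance] Classical.allZFSetDefinable

theorem wellFounded_of_acyclic_of_finite {α : Type*} {r : α → α → Prop} {s : Set α}
    (hs : s.Finite) (hrs : ∀ x y, r x y → x ∈ s) (hr : ∀ a, ¬ Relation.TransGen r a a) :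
    WellFounded r := by
  have hfin : ∀ y, {z | Relation.TransGen r z y}.Finite := fun y => hs.subset fun z hz => by
    obtain ⟨b, hzb, -⟩ := Relation.TransGen.head'_iff.1 hz
    exact hrs z b hzb
  refine Subrelation.wf (fun {x y} hxy => ?_)
    (measure fun y => {z | Relation.TransGen r z y}.ncard).wf
  exact Set.ncard_lt_ncard ⟨fun z hz => hz.tail hxy, fun h => hr x (h (.single hxy))⟩ (hfin y)

namespace IsCTM

theorem insert_mem (hM : IsCTM M) {x s : ZFSet} (hx : x ∈ M) (hs : s ∈ M) :
    insert x s ∈ M := by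
  have h : insert x s = ZFSet.sUnion {{x, x}, s} := by
    ext z
    simp
  rw [h]
  exact hM.union _ (hM.pairing _ (hM.pairing x hx x hx) s hs)

theorem mem_of_finite (hM : IsCTM M) {s : ZFSet} (hs : (s : Set ZFSet).Finite)
    (hsM : ∀ x ∈ s, x ∈ M) : s ∈ M := by
  suffices ∀ S : Set ZFSet, S.Finite → ∀ t : ZFSet, (t : Set ZFSet) = S → (∀ x ∈ t, x ∈ M) →
      t ∈ M from this _ hs s rfl hsM
  intro S hS
  induction S, hS using Set.Finite.induction_on with
  | empty =>
    intro t ht _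
    rw [show t = ∅ from SetLike.coe_injective (by simpa using ht)]
    exact hM.empty_mem
  | @insert a T haT _ ih =>
    intro t ht htM
    have hT : ((ZFSet.sep (· ≠ a) t : ZFSet) : Set ZFSet) = T := by
      ext z
      rw [ZFSet.coe_sep, Set.mem_ofPred_eq, ← SetLike.mem_coe, ht]
      grind
    have ht' : t = insert a (ZFSet.sep (· ≠ a) t) :=
      SetLike.coe_injective (by rw [ZFSet.coe_insert, hT, ht])
    have ha : a ∈ t := by
      rw [← SetLike.mem_coe, ht]
      exact Set.mem_insert a T
    rw [ht']
    exact hM.insert_mem (htM a ha) (ih _ hT fun x hx => htM x (ZFSet.mem_sep.1 hx).1)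

end IsCTM

def tag (x : ZFSet) : ZFSet := {∅, x}

theorem empty_mem_tag (x : ZFSet) : ∅ ∈ tag x := ZFSet.mem_pair.2 (Or.inl rfl)

theorem tag_injective : Function.Injective tag := by
  intro x y h
  have hx : x ∈ tag y := h ▸ ZFSet.mem_pair.2 (Or.inr rfl)
  have hy : y ∈ tag x := h ▸ ZFSet.mem_pair.2 (Or.inr rfl)
  simp only [tag, ZFSet.mem_pair] at hx hy
  grind

section Realize

variable {r : ZFSet → ZFSet → Prop} {d : ZFSet} {hr : WellFounded r}

noncomputable def realize (d : ZFSet) (hr : WellFounded r) : ZFSet → ZFSet :=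
  hr.fix fun x ih =>
    insert (tag x) (ZFSet.image (fun y => if h : r y x then ih y h else ∅) (ZFSet.sep (r · x) d))

theorem mem_realize {x z : ZFSet} :
    z ∈ realize d hr x ↔ z = tag x ∨ ∃ y ∈ d, r y x ∧ realize d hr y = z := by
  rw [realize, hr.fix_eq, ← realize]
  simp only [ZFSet.mem_insert_iff, ZFSet.mem_image, ZFSet.mem_sep]
  grind

theorem tag_mem_realize (x : ZFSet) : tag x ∈ realize d hr x := mem_realize.2 (Or.inl rfl)

theorem empty_notMem_realize (x : ZFSet) : ∅ ∉ realize d hr x := by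
  rw [mem_realize]
  rintro (h | ⟨y, -, -, h⟩)
  · exact ZFSet.notMem_empty ∅ (h ▸ empty_mem_tag x)
  · exact ZFSet.notMem_empty _ (h ▸ tag_mem_realize y)

theorem realize_injective : Function.Injective (realize d hr) := by
  intro x y h
  rcases mem_realize.1 (h ▸ tag_mem_realize x) with h' | ⟨z, -, -, h'⟩
  · exact tag_injective h'
  · exact absurd (h' ▸ empty_mem_tag x) (empty_notMem_realize z)

theorem realize_mem_realize_iff {x y : ZFSet} :
    realize d hr x ∈ realize d hr y ↔ x ∈ d ∧ r x y := by
  rw [mem_realize]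
  constructor
  · rintro (h | ⟨z, hz, hzy, h⟩)
    · exact absurd (h ▸ empty_mem_tag y) (empty_notMem_realize x)
    · obtain rfl := realize_injective h
      exact ⟨hz, hzy⟩
  · rintro ⟨hx, hxy⟩
    exact Or.inr ⟨x, hx, hxy, rfl⟩

theorem IsCTM.realize_mem (hM : IsCTM M) (hd : (d : Set ZFSet).Finite)
    (hdM : ∀ x ∈ d, x ∈ M) {x : ZFSet} (hx : x ∈ M) : realize d hr x ∈ M := by
  induction x using hr.induction with
  | _ x ih =>
    refine hM.mem_of_finite (Set.Finite.subset ((hd.image (realize d hr)).insert (tag x)) ?_) ?_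
    · intro z hz
      rcases mem_realize.1 hz with rfl | ⟨y, hy, -, rfl⟩
      · exact Set.mem_insert _ _
      · exact Set.mem_insert_of_mem _ ⟨y, hy, rfl⟩
    · intro z hz
      rcases mem_realize.1 hz with rfl | ⟨y, hy, hyx, rfl⟩
      · exact hM.pairing _ hM.empty_mem x hx
      · exact ih y hyx (hdM y hy)

end Realize

section Graph

variable {g : ZFSet → ZFSet} {d : ZFSet}

noncomputable def graphOn (g : ZFSet → ZFSet) (d : ZFSet) : ZFSet :=
  ZFSet.image (fun i => ZFSet.pair i (g i)) d

theorem pair_mem_graphOn {a b : ZFSet} : ZFSet.pair a b ∈ graphOn g d ↔ a ∈ d ∧ g a = b := by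
  simp only [graphOn, ZFSet.mem_image, ZFSet.pair_inj]
  grind

theorem isFuncZ_graphOn : isFuncZ (graphOn g d) := by
  refine ⟨fun x hx => ?_, fun a b b' hb hb' => ?_⟩
  · obtain ⟨i, -, rfl⟩ := ZFSet.mem_image.1 hx
    exact ⟨i, g i, rfl⟩
  · rw [← (pair_mem_graphOn.1 hb).2, ← (pair_mem_graphOn.1 hb').2]

theorem isInjZ_graphOn (hg : Set.InjOn g d) : isInjZ (graphOn g d) := by
  intro a a' b ha ha'
  obtain ⟨had, rfl⟩ := pair_mem_graphOn.1 ha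
  obtain ⟨had', hb⟩ := pair_mem_graphOn.1 ha'
  exact hg had' had hb |>.symm

theorem domZ_graphOn : domZ (graphOn g d) = d.toSet := by
  ext a
  simp only [domZ, pair_mem_graphOn, Set.mem_ofPred_eq]
  exact ⟨fun ⟨_, h, _⟩ => h, fun h => ⟨g a, h, rfl⟩⟩

theorem ranZ_graphOn : ranZ (graphOn g d) = g '' d := by
  ext b
  simp [ranZ, pair_mem_graphOn]

end Graph

theorem FCond.exists_total (hM : IsCTM M) {d e f : ZFSet} (hc : FCond M d e f) :
    ∃ f', FCond M d e f' ∧ domZ f' = d.toSet := by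
  have hwf : WellFounded fun x y => ZFSet.pair x y ∈ e := by
    refine wellFounded_of_acyclic_of_finite hc.d_fin (fun x y hxy => ?_) hc.e_acyc
    obtain ⟨a, ha, b, -, hab⟩ := hc.e_sub _ hxy
    exact (ZFSet.pair_inj.1 hab).1 ▸ ha
  have hdM : ∀ x ∈ d, x ∈ M := fun x hx => hM.transitive.mem_trans (hc.d_sub x hx) hM.infinity
  refine ⟨graphOn (realize d hwf) d, ⟨hc.d_sub, hc.d_fin, hc.e_sub, hc.e_acyc, isFuncZ_graphOn,
    isInjZ_graphOn realize_injective.injOn, Or.inr domZ_graphOn, ?_, ?_⟩, domZ_graphOn⟩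
  · rintro b hb
    rw [ranZ_graphOn] at hb
    obtain ⟨i, hi, rfl⟩ := hb
    exact hM.realize_mem hc.d_fin hdM (hdM i hi)
  · intro _ i hi j _ a b hia hjb
    obtain ⟨-, rfl⟩ := pair_mem_graphOn.1 hia
    obtain ⟨-, rfl⟩ := pair_mem_graphOn.1 hjb
    rw [realize_mem_realize_iff]
    exact ⟨fun h => ⟨hi, h⟩, And.right⟩

theorem isFuncZ.notMem_of_domZ_eq_empty {f : ZFSet} (hf : isFuncZ f) (h : domZ f = ∅)
    (x : ZFSet) : x ∉ f := by
  intro hx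
  obtain ⟨a, b, rfl⟩ := hf.1 x hx
  exact (h ▸ ⟨b, hx⟩ : a ∈ (∅ : Set ZFSet))

theorem friedmanLe_tripleZ {d e f f' : ZFSet}
    (he : ∀ x ∈ e, ∃ a ∈ d, ∃ b ∈ d, x = ZFSet.pair a b) (hf : ∀ x ∈ f, x ∈ f') :
    FriedmanLe (tripleZ d e f') (tripleZ d e f) :=
  ⟨d, e, f', d, e, f, rfl, rfl, fun _ h => h, fun x => ⟨fun hx => ⟨hx, he x hx⟩, And.left⟩, hf⟩

/-- For every countable transitive model `M` of `ZF⁻`, the set of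
conditions `p = ⟨d_p, e_p, f_p⟩` of the Friedman forcing `𝔽^M` with
`dom f_p = d_p` is dense in `𝔽^M`. -/
theorem statement8 (M : ZFSet) (hM : IsCTM M) :
    ∀ p ∈ FriedmanP M, ∃ q ∈ FriedmanP M, FriedmanLe q p ∧
      ∃ d e f, FCond M d e f ∧ q = tripleZ d e f ∧ domZ f = d.toSet := by
  rintro p ⟨d, e, f, hc, rfl⟩
  rcases hc.f_dom with hdom | hdom
  · obtain ⟨f', hc', hdom'⟩ := hc.exists_total hM
    have hf : ∀ x ∈ f, x ∈ f' := fun x hx => absurd hx (hc.f_fun.notMem_of_domZ_eq_empty hdom x)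
    exact ⟨_, ⟨d, e, f', hc', rfl⟩, friedmanLe_tripleZ hc.e_sub hf, d, e, f', hc', rfl, hdom'⟩
  · exact ⟨_, ⟨d, e, f, hc, rfl⟩, friedmanLe_tripleZ hc.e_sub fun _ h => h, d, e, f, hc, rfl, hdom⟩
end CF
end
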